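/- arXiv:1902.07617 — 12 statements merged into one kernel-verified Lean document; each statement's English description precedes it below -/
import Mathlib

section
/- The equilibrium of the logit queueing system is unique: if (q̄_1,...,q̄_N) are nonnegative reals with λ·exp(-θq̄_i)/Σ_{j=1}^N exp(-θq̄_j) - μq̄_i = 0 for all i, then q̄_i = λ/(Nμ) for all i. -/
open Real Finset

theorem equilibrium_unique
    (lam mu th : ℝ) (N : ℕ) (hN : 0 < N)
    (hlam : 0 < lam) (hmu : 0 < mu) (hth : 0 < th)
    (q : Fin N → ℝ) (hq0 : ∀ i, 0 ≤ q i)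
    (heq : ∀ i : Fin N,
      lam * Real.exp (-th * q i) / (∑ j : Fin N, Real.exp (-th * q j)) - mu * q i = 0) :
    ∀ i : Fin N, q i = lam / (N * mu) := by
  set S := ∑ j : Fin N, Real.exp (-th * q j) with hS
  have hSpos : 0 < S := by
    apply Finset.sum_pos (fun j _ => Real.exp_pos _)
    exact Finset.univ_nonempty_iff.mpr (Fin.pos_iff_nonempty.mp hN)
  have key : ∀ i : Fin N, mu * q i * S = lam * Real.exp (-th * q i) := by
    intro i
    have h := heq i
    have : lam * Real.exp (-th * q i) / S = mu * q i := by linarith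
    field_simp at this
    rw [show -th * q i = -(th * q i) by ring]
    linarith
  have hall : ∀ i j : Fin N, q i = q j := by
    intro i j
    by_contra hne
    rcases lt_or_gt_of_ne hne with h | h
    · have he : Real.exp (-th * q j) < Real.exp (-th * q i) := by
        apply Real.exp_lt_exp.mpr; nlinarith
      have h1 := key i
      have h2 := key j
      nlinarith [mul_pos hmu hSpos, mul_lt_mul_of_pos_right h (mul_pos hmu hSpos),
        mul_lt_mul_of_pos_left he hlam]
    · have he : Real.exp (-th * q i) < Real.exp (-th * q j) := by
        apply Real.exp_lt_exp.mpr; nlinarith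
      have h1 := key i
      have h2 := key j
      nlinarith [mul_pos hmu hSpos, mul_lt_mul_of_pos_right h (mul_pos hmu hSpos),
        mul_lt_mul_of_pos_left he hlam]
  intro i
  have hSeq : S = N * Real.exp (-th * q i) := by
    rw [hS]
    rw [Finset.sum_congr rfl (fun j _ => by rw [hall j i])]
    simp [Finset.card_univ, mul_comm]
  have h1 := key i
  rw [hSeq] at h1
  have hE := Real.exp_pos (-th * q i)
  have hNpos : (0:ℝ) < N := by exact_mod_cast hN
  have : mu * q i * N = lam := by
    have := mul_right_cancel₀ (ne_of_gt hE) (by nlinarith : mu * q i * (N:ℝ) * Real.exp (-th * q i) = lam * Real.exp (-th * q i))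
    linarith
  field_simp
  linarith
end

section
/- If (q̄_1,...,q̄_N) is a tuple with Σ q̄_i = λ/μ, and there exist indices s, g with q̄_s = λ/(Nμ) - γ and q̄_g = λ/(Nμ) + ε for some γ, ε > 0, and q̄_s satisfies the equilibrium equation λ·exp(-θq̄_s)/Σ_j exp(-θq̄_j) = μq̄_s, then λ·exp(-θq̄_g)/Σ_j exp(-θq̄_j) - μq̄_g = -(λ/N)(1 - e^{-θ(ε+γ)}) - μ(ε + γe^{-θ(ε+γ)}) < 0. -/
open Real Finset

theorem equilibrium_uniqueness_key_computation
    (lam mu th gam eps : ℝ) (N : ℕ) (hN : 0 < N)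
    (hlam : 0 < lam) (hmu : 0 < mu) (hth : 0 < th)
    (hgam : 0 < gam) (heps : 0 < eps)
    (hpos : 0 < lam / (N * mu) - gam)
    (q : Fin N → ℝ) (s g : Fin N)
    (hsum : ∑ i : Fin N, q i = lam / mu)
    (hs : q s = lam / (N * mu) - gam)
    (hg : q g = lam / (N * mu) + eps)
    (heqs : lam * Real.exp (-th * q s) / (∑ j : Fin N, Real.exp (-th * q j)) = mu * q s) :
    lam * Real.exp (-th * q g) / (∑ j : Fin N, Real.exp (-th * q j)) - mu * q g
      = -(lam / N) * (1 - Real.exp (-th * (eps + gam)))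
        - mu * (eps + gam * Real.exp (-th * (eps + gam)))
    ∧ -(lam / N) * (1 - Real.exp (-th * (eps + gam)))
        - mu * (eps + gam * Real.exp (-th * (eps + gam))) < 0 := by
  have hNR : (0:ℝ) < (N:ℝ) := by exact_mod_cast hN
  have hqg : q g = q s + (eps + gam) := by rw [hs, hg]; ring
  have hexp : Real.exp (-th * q g)
      = Real.exp (-th * q s) * Real.exp (-th * (eps + gam)) := by
    rw [← Real.exp_add]; congr 1; rw [hqg]; ring
  have h1 : lam * Real.exp (-th * q g) / (∑ j : Fin N, Real.exp (-th * q j))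
      = mu * q s * Real.exp (-th * (eps + gam)) := by
    rw [hexp, ← heqs]; ring
  constructor
  · rw [h1, hs, hg]
    field_simp
    ring
  · have he1 : Real.exp (-th * (eps + gam)) < 1 := by
      rw [Real.exp_lt_one_iff]; nlinarith
    have he0 : 0 < Real.exp (-th * (eps + gam)) := Real.exp_pos _
    have t1 : 0 < (lam / N) * (1 - Real.exp (-th * (eps + gam))) := by
      apply mul_pos (div_pos hlam hNR); linarith
    have t2 : 0 < mu * (eps + gam * Real.exp (-th * (eps + gam))) := by
      apply mul_pos hmu; nlinarith
    linarith
end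

section
/- If R = a + ib with a, b real satisfies the characteristic equation -R - (λθ/N)(e^{-RΔ} + δR e^{-RΔ}) - μ = 0, and N² e^{2aΔ} ≠ δ²λ²θ², then b² = (λ²θ²(aδ+1)² - e^{2aΔ}N²(a+μ)²)/(e^{2aΔ}N² - δ²λ²θ²). -/
open Real Complex

/-! Writing the characteristic equation as `R + μ = -(λθ/N)(1 + δR) e^{-RΔ}` and taking squared
moduli removes the oscillating factor `e^{-ibΔ}`, leaving
`e^{2aΔ} N² ((a + μ)² + b²) = λ²θ² ((aδ + 1)² + δ²b²)`, which is linear in `b²`. -/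

theorem normSq_add_mul_exp_eq_of_char {z : ℂ} {k μ δ Δ : ℝ}
    (h : z + μ = -k * (1 + δ * z) * Complex.exp (-z * Δ)) :
    normSq (z + μ) * Real.exp (2 * z.re * Δ) = k ^ 2 * normSq (1 + δ * z) := by
  have hexp : normSq (Complex.exp (-z * Δ)) * Real.exp (2 * z.re * Δ) = 1 := by
    rw [← Complex.sq_norm, Complex.norm_exp, ← Real.exp_nat_mul, ← Real.exp_add]
    simp [mul_assoc]
  rw [h, normSq_mul, normSq_mul, normSq_neg, normSq_ofReal, mul_assoc, hexp]
  ring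

theorem sq_eq_div_of_mul_sum_sq_eq {a b k μ δ E : ℝ}
    (h : E * ((a + μ) ^ 2 + b ^ 2) = k ^ 2 * ((a * δ + 1) ^ 2 + δ ^ 2 * b ^ 2))
    (hne : E - δ ^ 2 * k ^ 2 ≠ 0) :
    b ^ 2 = (k ^ 2 * (a * δ + 1) ^ 2 - E * (a + μ) ^ 2) / (E - δ ^ 2 * k ^ 2) := by
  rw [eq_div_iff hne]
  linear_combination h

theorem char_eq_imaginary_part_formula_general
    (lam mu th dlt Del a b : ℝ) (N : ℕ) (hN : 0 < N)
    (R : ℂ) (hR : R = (a : ℂ) + (b : ℂ) * Complex.I)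
    (hchar : -R - ((lam * th / N : ℝ) : ℂ) *
        (Complex.exp (-R * (Del : ℂ)) + (dlt : ℂ) * R * Complex.exp (-R * (Del : ℂ)))
        - (mu : ℂ) = 0)
    (hne : (N : ℝ)^2 * Real.exp (2 * a * Del) ≠ dlt^2 * lam^2 * th^2) :
    b^2 = (lam^2 * th^2 * (a * dlt + 1)^2 - Real.exp (2 * a * Del) * (N : ℝ)^2 * (a + mu)^2)
      / (Real.exp (2 * a * Del) * (N : ℝ)^2 - dlt^2 * lam^2 * th^2) := by
  have hN0 : (N : ℝ) ≠ 0 := by positivity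
  have hmodSq := normSq_add_mul_exp_eq_of_char (z := R) (k := lam * th / N) (μ := mu)
    (δ := dlt) (Δ := Del) (by linear_combination -hchar)
  have hre : R.re = a := by simp [hR]
  have hleft : R + mu = ((a + mu : ℝ) : ℂ) + (b : ℝ) * I := by rw [hR]; push_cast; ring
  have hright : 1 + dlt * R = ((a * dlt + 1 : ℝ) : ℂ) + (dlt * b : ℝ) * I := by
    rw [hR]; push_cast; ring
  rw [hre, hleft, hright, normSq_add_mul_I, normSq_add_mul_I] at hmodSq
  have hk : (lam * th / N) ^ 2 * N ^ 2 = (lam * th) ^ 2 := by field_simp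
  have hcleared : (Real.exp (2 * a * Del) * N ^ 2) * ((a + mu) ^ 2 + b ^ 2)
      = (lam * th) ^ 2 * ((a * dlt + 1) ^ 2 + dlt ^ 2 * b ^ 2) := by
    linear_combination (N : ℝ) ^ 2 * hmodSq + ((a * dlt + 1) ^ 2 + dlt ^ 2 * b ^ 2) * hk
  rw [sq_eq_div_of_mul_sum_sq_eq hcleared (by contrapose! hne; linear_combination hne)]
  ring

theorem char_eq_imaginary_part_formula
    (lam mu th dlt Del a b : ℝ) (N : ℕ) (hN : 0 < N)
    (hlam : 0 < lam) (hmu : 0 < mu) (hth : 0 < th) (hdlt : 0 ≤ dlt) (hDel : 0 < Del)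
    (R : ℂ) (hR : R = (a : ℂ) + (b : ℂ) * Complex.I)
    (hchar : -R - ((lam * th / N : ℝ) : ℂ) *
        (Complex.exp (-R * (Del : ℂ)) + (dlt : ℂ) * R * Complex.exp (-R * (Del : ℂ)))
        - (mu : ℂ) = 0)
    (hne : (N : ℝ)^2 * Real.exp (2 * a * Del) ≠ dlt^2 * lam^2 * th^2) :
    b^2 = (lam^2 * th^2 * (a * dlt + 1)^2 - Real.exp (2 * a * Del) * (N : ℝ)^2 * (a + mu)^2)
      / (Real.exp (2 * a * Del) * (N : ℝ)^2 - dlt^2 * lam^2 * th^2) :=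
  char_eq_imaginary_part_formula_general lam mu th dlt Del a b N hN R hR hchar hne
end

section
/- Suppose δ < N/(λθ), λθ ≤ Nμ, and R = a + ib satisfies the characteristic equation -R - (λθ/N)e^{-RΔ}(1 + δR) - μ = 0 for some Δ > 0. Then a < 0; i.e., all eigenvalue real parts are negative. -/
/-!
Write `c = λθ/N`, so that `c ≤ μ` and `cδ < 1`, and the characteristic equation reads
`R + μ = -c e^{-RΔ} (1 + δR)`. If `Re R ≥ 0`, then `|e^{-RΔ}| ≤ 1`, while comparing real and
imaginary parts gives `c |1 + δR| < |R + μ|` unless `R = 0`; and `R = 0` would force `μ = -c`.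
-/

open Real Complex

theorem mul_norm_one_add_mul_lt_norm_add {c δ μ : ℝ} {R : ℂ} (hc : 0 ≤ c) (hδ : 0 ≤ δ)
    (hcδ : c * δ < 1) (hcμ : c ≤ μ) (hR : 0 ≤ R.re) (hR0 : R ≠ 0) :
    c * ‖1 + δ * R‖ < ‖R + μ‖ := by
  have hre : c * (1 + δ * R.re) ≤ R.re + μ := by nlinarith
  have hc1 : 0 ≤ c * (1 + δ * R.re) := by positivity
  have hcδ_sq : (c * δ) ^ 2 < 1 := pow_lt_one₀ (by positivity) hcδ two_ne_zero
  have hstrict : (c * (1 + δ * R.re)) ^ 2 + (c * δ * R.im) ^ 2 < (R.re + μ) ^ 2 + R.im ^ 2 := by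
    rw [mul_pow (c * δ)]
    rcases hR.lt_or_eq with hpos | hzero
    · have : c * (1 + δ * R.re) < R.re + μ := by nlinarith
      have := pow_lt_pow_left₀ this hc1 two_ne_zero
      nlinarith [sq_nonneg R.im]
    · have him : R.im ≠ 0 := fun h => hR0 (Complex.ext hzero.symm h)
      have := pow_le_pow_left₀ hc1 hre 2
      nlinarith [sq_pos_of_ne_zero him]
  have hlhs : (c * ‖1 + δ * R‖) ^ 2 = (c * (1 + δ * R.re)) ^ 2 + (c * δ * R.im) ^ 2 := by
    simp [mul_pow, Complex.sq_norm, Complex.normSq_apply]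
    ring
  have hrhs : ‖R + μ‖ ^ 2 = (R.re + μ) ^ 2 + R.im ^ 2 := by
    simp [Complex.sq_norm, Complex.normSq_apply]
    ring
  exact lt_of_pow_lt_pow_left₀ 2 (norm_nonneg _) (by rw [hlhs, hrhs]; exact hstrict)

theorem re_neg_of_add_add_mul_exp_mul_eq_zero {c δ μ Δ : ℝ} {R : ℂ} (hc : 0 < c) (hδ : 0 ≤ δ)
    (hcδ : c * δ < 1) (hcμ : c ≤ μ) (hΔ : 0 ≤ Δ)
    (hR : R + μ + c * (Complex.exp (-R * Δ) * (1 + δ * R)) = 0) :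
    R.re < 0 := by
  by_contra! hre
  by_cases hR0 : R = 0
  · subst hR0
    have : (μ + c : ℂ) = 0 := by simpa using hR
    norm_cast at this
    linarith
  have hexp : ‖Complex.exp (-R * Δ)‖ ≤ 1 := by
    rw [Complex.norm_exp, Real.exp_le_one_iff]
    simpa using mul_nonneg hre hΔ
  have hle : ‖R + μ‖ ≤ c * ‖1 + δ * R‖ := by
    rw [eq_neg_of_add_eq_zero_left hR, norm_neg, norm_mul, norm_mul, Complex.norm_real,
      Real.norm_of_nonneg hc.le]
    gcongr
    exact mul_le_of_le_one_left (norm_nonneg _) hexp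
  exact (mul_norm_one_add_mul_lt_norm_add hc.le hδ hcδ hcμ hre hR0).not_ge hle

theorem eigenvalues_negative_real_part_general
    (lam mu th dlt Del a b : ℝ) (N : ℕ) (hN : 0 < N)
    (hlam : 0 < lam) (hth : 0 < th) (hdlt : 0 ≤ dlt) (hDel : 0 < Del)
    (hsmall : dlt < N / (lam * th)) (hstab : lam * th ≤ N * mu)
    (R : ℂ) (hR : R = (a : ℂ) + (b : ℂ) * Complex.I)
    (hchar : -R - ((lam * th / N : ℝ) : ℂ) *
        (Complex.exp (-R * (Del : ℂ)) * (1 + (dlt : ℂ) * R))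
        - (mu : ℂ) = 0) :
    a < 0 := by
  have hN' : (0 : ℝ) < N := by exact_mod_cast hN
  have hlt : 0 < lam * th := mul_pos hlam hth
  have hc : 0 < lam * th / N := by positivity
  have hcδ : lam * th / N * dlt < 1 := by
    rw [div_mul_eq_mul_div, div_lt_one hN', mul_comm]
    exact (lt_div_iff₀ hlt).mp hsmall
  have hcμ : lam * th / N ≤ mu := by
    rw [div_le_iff₀ hN', mul_comm mu]
    exact hstab
  have hre : R.re = a := by simp [hR]
  rw [← hre]
  exact re_neg_of_add_add_mul_exp_mul_eq_zero hc hdlt hcδ hcμ hDel.le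
    (by linear_combination -hchar)

theorem eigenvalues_negative_real_part
    (lam mu th dlt Del a b : ℝ) (N : ℕ) (hN : 0 < N)
    (hlam : 0 < lam) (hmu : 0 < mu) (hth : 0 < th) (hdlt : 0 ≤ dlt) (hDel : 0 < Del)
    (hsmall : dlt < N / (lam * th)) (hstab : lam * th ≤ N * mu)
    (R : ℂ) (hR : R = (a : ℂ) + (b : ℂ) * Complex.I)
    (hchar : -R - ((lam * th / N : ℝ) : ℂ) *
        (Complex.exp (-R * (Del : ℂ)) * (1 + (dlt : ℂ) * R))
        - (mu : ℂ) = 0) :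
    a < 0 :=
  eigenvalues_negative_real_part_general lam mu th dlt Del a b N hN hlam hth hdlt hDel hsmall hstab
    R hR hchar
end

section
/- Suppose δ = N/(λθ) and λθ < Nμ. If R = a + ib satisfies the characteristic equation -R - (λθ/N)e^{-RΔ}(1 + δR) - μ = 0 for some Δ > 0, then a < 0. -/
/-!
With `c = λθ/N` we have `c δ = 1`, so the characteristic equation becomes
`e^{-RΔ} (c + R) = -(R + μ)`. Taking moduli, `e^{-aΔ} |R + c| = |R + μ|`. If `a ≥ 0` the
exponential factor is at most `1`, whereas `|R + μ|² - |R + c|² = (μ - c)(2a + μ + c) > 0`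
because `0 < c < μ`.
-/

open Real Complex

lemma Complex.norm_add_ofReal_lt_norm_add_ofReal {z : ℂ} {c μ : ℝ} (hz : 0 ≤ z.re)
    (hc : 0 ≤ c) (hcμ : c < μ) : ‖z + c‖ < ‖z + μ‖ := by
  have hsq : ‖z + c‖ ^ 2 < ‖z + μ‖ ^ 2 := by
    simp only [Complex.sq_norm, Complex.normSq_apply, add_re, add_im, ofReal_re, ofReal_im,
      add_zero]
    nlinarith
  exact lt_of_pow_lt_pow_left₀ 2 (norm_nonneg _) hsq

lemma Complex.norm_exp_neg_mul_ofReal_le_one {z : ℂ} {Δ : ℝ} (hz : 0 ≤ z.re) (hΔ : 0 ≤ Δ) :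
    ‖exp (-z * Δ)‖ ≤ 1 := by
  rw [Complex.norm_exp, Real.exp_le_one_iff]
  simpa [Complex.mul_re] using mul_nonneg hz hΔ

lemma exp_mul_add_eq_neg_of_characteristic {R c δ μ Δ : ℂ} (hcδ : c * δ = 1)
    (hchar : -R - c * (exp (-R * Δ) * (1 + δ * R)) - μ = 0) :
    exp (-R * Δ) * (c + R) = -(R + μ) := by
  linear_combination -hchar - exp (-R * Δ) * R * hcδ

lemma re_neg_of_exp_mul_add_eq_neg {R : ℂ} {c μ Δ : ℝ} (hc : 0 ≤ c) (hcμ : c < μ)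
    (hΔ : 0 ≤ Δ) (h : exp (-R * Δ) * (c + R) = -(R + μ)) : R.re < 0 := by
  by_contra! hR
  have hnorm : ‖exp (-R * Δ)‖ * ‖R + c‖ = ‖R + μ‖ := by
    rw [← norm_mul, add_comm R, h, norm_neg]
  have hle : ‖R + μ‖ ≤ ‖R + c‖ := by
    rw [← hnorm]
    exact mul_le_of_le_one_left (norm_nonneg _) (norm_exp_neg_mul_ofReal_le_one hR hΔ)
  exact hle.not_gt (norm_add_ofReal_lt_norm_add_ofReal hR hc hcμ)

theorem edge_case_negative_real_part_general
    (lam mu th dlt Del a b : ℝ) (N : ℕ)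
    (hlam : 0 < lam) (hth : 0 < th) (hDel : 0 < Del)
    (hdlt : dlt = N / (lam * th)) (hlt : lam * th < N * mu)
    (R : ℂ) (hR : R = (a : ℂ) + (b : ℂ) * Complex.I)
    (hchar : -R - ((lam * th / N : ℝ) : ℂ) *
        (Complex.exp (-R * (Del : ℂ)) * (1 + (dlt : ℂ) * R))
        - (mu : ℂ) = 0) :
    a < 0 := by
  have hlamth : 0 < lam * th := mul_pos hlam hth
  have hN : (0 : ℝ) < N :=
    Nat.cast_pos.mpr (Nat.pos_of_ne_zero fun h => by simp [h] at hlt; linarith)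
  have hcδ : ((lam * th / N : ℝ) : ℂ) * dlt = 1 := by
    rw [← ofReal_mul, hdlt, div_mul_div_cancel₀ hN.ne', div_self hlamth.ne', ofReal_one]
  have hcμ : lam * th / N < mu := by rw [div_lt_iff₀ hN]; linarith
  have hre := re_neg_of_exp_mul_add_eq_neg (div_pos hlamth hN).le hcμ hDel.le
    (exp_mul_add_eq_neg_of_characteristic hcδ hchar)
  simpa [hR] using hre

theorem edge_case_negative_real_part
    (lam mu th dlt Del a b : ℝ) (N : ℕ) (hN : 0 < N)
    (hlam : 0 < lam) (hmu : 0 < mu) (hth : 0 < th) (hDel : 0 < Del)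
    (hdlt : dlt = N / (lam * th)) (hlt : lam * th < N * mu)
    (R : ℂ) (hR : R = (a : ℂ) + (b : ℂ) * Complex.I)
    (hchar : -R - ((lam * th / N : ℝ) : ℂ) *
        (Complex.exp (-R * (Del : ℂ)) * (1 + (dlt : ℂ) * R))
        - (mu : ℂ) = 0) :
    a < 0 :=
  edge_case_negative_real_part_general lam mu th dlt Del a b N hlam hth hDel hdlt hlt R hR hchar
end

section
/- If R = iω with ω real and positive is a root of -R - (λθ/N)e^{-RΔ}(1 + δR) - μ = 0, then ω² = (λ²θ² - N²μ²)/(N² - δ²λ²θ²) and cos(ωΔ) = -(δλ²θ² + N²μ)/(Nλθ(1 + δμ)). -/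
open Real Complex
set_option maxHeartbeats 1000000

theorem purely_imaginary_root_conditions
    (lam mu th dlt Del omega : ℝ) (N : ℕ) (hN : 0 < N)
    (hlam : 0 < lam) (hmu : 0 < mu) (hth : 0 < th) (hdlt : 0 ≤ dlt) (hDel : 0 < Del)
    (homega : 0 < omega) (hne : dlt * lam * th ≠ N)
    (hchar : -(Complex.I * (omega : ℂ)) - ((lam * th / N : ℝ) : ℂ) *
        (Complex.exp (-(Complex.I * (omega : ℂ)) * (Del : ℂ)) *
          (1 + (dlt : ℂ) * (Complex.I * (omega : ℂ)))) - (mu : ℂ) = 0) :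
    omega^2 = (lam^2 * th^2 - (N : ℝ)^2 * mu^2) / ((N : ℝ)^2 - dlt^2 * lam^2 * th^2)
    ∧ Real.cos (omega * Del)
        = -(dlt * lam^2 * th^2 + (N : ℝ)^2 * mu) / (N * lam * th * (1 + dlt * mu)) := by
  obtain ⟨C, hC⟩ : ∃ C, Real.cos (omega*Del) = C := ⟨_, rfl⟩
  obtain ⟨S, hS⟩ : ∃ S, Real.sin (omega*Del) = S := ⟨_, rfl⟩
  have hNr : ((N:ℝ)) ≠ 0 := Nat.cast_ne_zero.mpr hN.ne'
  have hexp : Complex.exp (-(Complex.I * (omega:ℂ)) * (Del:ℂ))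
      = (C : ℂ) - (S : ℂ) * Complex.I := by
    have h : -(Complex.I * (omega:ℂ)) * (Del:ℂ) = ((-(omega*Del) : ℝ) : ℂ) * Complex.I := by
      push_cast; ring
    rw [h, Complex.exp_mul_I, ← Complex.ofReal_cos, ← Complex.ofReal_sin,
      Real.cos_neg, Real.sin_neg, hC, hS]
    push_cast; ring
  rw [hexp] at hchar
  have hre := congrArg Complex.re hchar
  have him := congrArg Complex.im hchar
  simp [Complex.ext_iff] at hre him
  -- hre : -(lam * th / ↑N * (C + S * (dlt * omega))) - mu = 0
  -- him : -omega - lam * th / ↑N * (C * (dlt * omega) + -S) = 0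
  have hre' : lam*th*(C + dlt*omega*S) + mu*(N:ℝ) = 0 := by
    field_simp at hre; linarith [hre]
  have him' : lam*th*(S - dlt*omega*C) - omega*(N:ℝ) = 0 := by
    field_simp at him; linarith [him]
  clear hchar hexp hre him
  have pyth : C^2 + S^2 = 1 := by
    rw [← hC, ← hS]; exact (Real.cos_sq_add_sin_sq _)
  have hsum : lam^2*th^2*(1+dlt^2*omega^2) = (N:ℝ)^2*(mu^2+omega^2) := by
    linear_combination (lam*th*(C+dlt*omega*S) - mu*(N:ℝ)) * hre'
      + (lam*th*(S-dlt*omega*C) + omega*(N:ℝ)) * him'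
      - lam^2*th^2*(1+dlt^2*omega^2) * pyth
  have hkey : omega^2 * ((N:ℝ)^2 - dlt^2*lam^2*th^2) = lam^2*th^2 - (N:ℝ)^2*mu^2 := by
    linarith [hsum]
  have hden : ((N:ℝ)^2 - dlt^2*lam^2*th^2) ≠ 0 := by
    have h1 : 0 < (N:ℝ) := Nat.cast_pos.mpr hN
    have h2 : dlt*lam*th ≠ (N:ℝ) := hne
    have h3 : 0 ≤ dlt*lam*th := by positivity
    intro h
    apply h2
    nlinarith [sq_nonneg (dlt*lam*th - N), sq_nonneg (dlt*lam*th + N)]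
  have hC' : lam*th*(1+dlt^2*omega^2)*C + (N:ℝ)*(mu + dlt*omega^2) = 0 := by
    linear_combination hre' - dlt*omega*him'
  -- 1 - dlt^2*mu^2 ≠ 0
  have h2 : (N:ℝ)^2*(1-dlt^2*mu^2) = (1+dlt^2*omega^2)*((N:ℝ)^2-dlt^2*lam^2*th^2) := by
    linear_combination dlt^2 * hsum
  have hdm : (1 : ℝ) - dlt*mu ≠ 0 := by
    intro h
    have hz : (1:ℝ) - dlt^2*mu^2 = 0 := by linear_combination (1+dlt*mu) * h
    have hz2 : (1+dlt^2*omega^2)*((N:ℝ)^2-dlt^2*lam^2*th^2) = 0 := by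
      rw [← h2, hz, mul_zero]
    exact hden ((mul_eq_zero.mp hz2).resolve_left (by positivity))
  constructor
  · rw [eq_div_iff hden]; linarith [hkey]
  · rw [hC, eq_div_iff (by positivity : (N:ℝ)*lam*th*(1+dlt*mu) ≠ 0)]
    have hT : (N:ℝ)*(1-dlt*mu) * (C*((N:ℝ)*lam*th*(1+dlt*mu)) + (dlt*lam^2*th^2 + (N:ℝ)^2*mu)) = 0 := by
      linear_combination ((N:ℝ)^2 - dlt^2*lam^2*th^2) * hC' + (-dlt^2*lam*th*C - (N:ℝ)*dlt) * hkey
    have hNdm : (N:ℝ)*(1-dlt*mu) ≠ 0 := mul_ne_zero hNr hdm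
    have := (mul_eq_zero.mp hT).resolve_left hNdm
    linarith [this]
end

section
/- If R = iω with ω > 0 is a purely imaginary root of the characteristic equation, then cos(ωΔ) = -N(μ + δω²)/(λθ(1 + δ²ω²)) < 0, and hence ωΔ > π/2. -/
open Real Complex

theorem purely_imaginary_root_cos_negative
    (lam mu th dlt Del omega : ℝ) (N : ℕ) (hN : 0 < N)
    (hlam : 0 < lam) (hmu : 0 < mu) (hth : 0 < th) (hdlt : 0 ≤ dlt) (hDel : 0 < Del)
    (homega : 0 < omega)
    (hchar : -(Complex.I * (omega : ℂ)) - ((lam * th / N : ℝ) : ℂ) *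
        (Complex.exp (-(Complex.I * (omega : ℂ)) * (Del : ℂ)) *
          (1 + (dlt : ℂ) * (Complex.I * (omega : ℂ)))) - (mu : ℂ) = 0) :
    Real.cos (omega * Del)
        = -((N : ℝ) * (mu + dlt * omega^2)) / (lam * th * (1 + dlt^2 * omega^2))
    ∧ Real.cos (omega * Del) < 0
    ∧ omega * Del > Real.pi / 2 := by
  set a : ℝ := lam * th / N with ha
  have haN : (0:ℝ) < N := Nat.cast_pos.mpr hN
  have hapos : 0 < a := by positivity
  set c := Real.cos (omega * Del) with hc
  set s := Real.sin (omega * Del) with hs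
  have hexp : Complex.exp (-(Complex.I * (omega : ℂ)) * (Del : ℂ))
      = (c : ℂ) - (s : ℂ) * Complex.I := by
    rw [show -(Complex.I * (omega : ℂ)) * (Del : ℂ) = ((-(omega * Del) : ℝ) : ℂ) * Complex.I by
      push_cast; ring, Complex.exp_mul_I]
    rw [show ((-(omega * Del) : ℝ) : ℂ) = -((omega * Del : ℝ) : ℂ) by push_cast; ring]
    rw [Complex.cos_neg, Complex.sin_neg, ← Complex.ofReal_cos, ← Complex.ofReal_sin]
    ring
  rw [hexp] at hchar
  have h1 : -(a * (c + s * (dlt * omega))) - mu = 0 := by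
    have := congrArg Complex.re hchar
    simpa using this
  have h2 : -omega - a * (dlt * omega * c - s) = 0 := by
    have := congrArg Complex.im hchar
    simp [Complex.ext_iff] at this
    linarith [this]
  have hden : 0 < a * (1 + dlt ^ 2 * omega ^ 2) := by positivity
  have hcval : c = -(mu + dlt * omega ^ 2) / (a * (1 + dlt ^ 2 * omega ^ 2)) := by
    field_simp
    linear_combination (-1 : ℝ) * h1 - dlt * omega * h2
  have hcval' : c = -((N : ℝ) * (mu + dlt * omega^2)) / (lam * th * (1 + dlt^2 * omega^2)) := by
    rw [hcval, ha]
    field_simp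
  have hcneg : c < 0 := by
    rw [hcval]
    apply div_neg_of_neg_of_pos
    · nlinarith
    · exact hden
  refine ⟨hcval', hcneg, ?_⟩
  by_contra h
  push_neg at h
  have : 0 ≤ c := Real.cos_nonneg_of_mem_Icc ⟨by nlinarith [Real.pi_pos], h⟩
  linarith
end

section
/- Assume λθ > Nμ and 0 ≤ δ < N/(λθ). Define Δ_cr(δ) = arccos(-(δλ²θ² + N²μ)/(Nλθ(1+δμ))) · sqrt((N² - δ²λ²θ²)/(λ²θ² - N²μ²)). Then Δ_cr is a concave function of δ on [0, N/(λθ)); in particular its second derivative with respect to δ is negative on this interval. -/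
open Real Set

noncomputable def Dcr (lam mu th : ℝ) (N : ℕ) (d : ℝ) : ℝ :=
  Real.arccos (-(d * lam^2 * th^2 + (N : ℝ)^2 * mu) / ((N : ℝ) * lam * th * (1 + d * mu))) *
    Real.sqrt (((N : ℝ)^2 - d^2 * lam^2 * th^2) / (lam^2 * th^2 - (N : ℝ)^2 * mu^2))

/-!
With `x = λθδ/N` and `c = Nμ/(λθ) ∈ (0, 1)`, `Δ_cr` is a positive multiple of
`F(x) = arccos g(x) · √(1 - x²)` on `[0, 1)`, where `g(x) = -(x + c)/(1 + cx)`.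
The Möbius map `g` preserves `(-1, 1)` and `1 - g² = (1 - x²)(1 - c²)/(1 + cx)²`, so
`(arccos ∘ g)' = √(1 - c²)/((1 + cx)√(1 - x²))`. Differentiating twice,
`F'' = -c√(1 - c²)/(1 + cx)² - x√(1 - c²)/((1 + cx)(1 - x²)) - arccos g/(1 - x²)^{3/2}`,
where for `x ≥ 0` the first two terms are nonpositive and the last one is negative.
-/

theorem deriv_deriv_const_mul_comp_mul (f : ℝ → ℝ) (K m x : ℝ) :
    deriv (deriv fun y => K * f (m * y)) x = K * m ^ 2 * deriv (deriv f) (m * x) := by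
  have hderiv : deriv (fun y => K * f (m * y)) = fun y => K * m * deriv f (m * y) := by
    funext y
    rw [deriv_const_mul_field']
    dsimp only
    rw [deriv_comp_mul_left m f y, smul_eq_mul, mul_assoc]
  rw [hderiv, deriv_const_mul_field']
  dsimp only
  rw [deriv_comp_mul_left m (deriv f) x, smul_eq_mul]
  ring

namespace Dcr

noncomputable def profile (c x : ℝ) : ℝ :=
  arccos (-(x + c) / (1 + c * x)) * √(1 - x ^ 2)

noncomputable def profileDeriv (c x : ℝ) : ℝ :=
  √(1 - c ^ 2) / (1 + c * x) - arccos (-(x + c) / (1 + c * x)) * x / √(1 - x ^ 2)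

noncomputable def profileDeriv2 (c x : ℝ) : ℝ :=
  -(√(1 - c ^ 2) * c / (1 + c * x) ^ 2) - √(1 - c ^ 2) * x / ((1 + c * x) * (1 - x ^ 2))
    - arccos (-(x + c) / (1 + c * x)) / √(1 - x ^ 2) ^ 3

variable {c x : ℝ}

theorem one_add_mul_pos (hc : c ∈ Ioo (-1) 1) (hx : x ∈ Ioo (-1) 1) : 0 < 1 + c * x := by
  obtain ⟨hc₁, hc₂⟩ := hc
  obtain ⟨hx₁, hx₂⟩ := hx
  nlinarith [mul_pos (sub_pos.2 hc₂) (sub_pos.2 hx₂)]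

theorem mobius_mem_Ioo (hc : c ∈ Ioo (-1) 1) (hx : x ∈ Ioo (-1) 1) :
    -(x + c) / (1 + c * x) ∈ Ioo (-1) 1 := by
  have hu := one_add_mul_pos hc hx
  obtain ⟨hc₁, hc₂⟩ := hc
  obtain ⟨hx₁, hx₂⟩ := hx
  constructor
  · rw [lt_div_iff₀ hu]
    nlinarith [mul_pos (sub_pos.2 hc₂) (sub_pos.2 hx₂)]
  · rw [div_lt_one hu]
    nlinarith [mul_pos (neg_lt_iff_pos_add.1 hc₁) (neg_lt_iff_pos_add.1 hx₁)]

theorem sqrt_one_sub_mobius_sq (hc : c ∈ Ioo (-1) 1) (hx : x ∈ Ioo (-1) 1) :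
    √(1 - (-(x + c) / (1 + c * x)) ^ 2) = √(1 - x ^ 2) * √(1 - c ^ 2) / (1 + c * x) := by
  have hu := one_add_mul_pos hc hx
  have hsq : 1 - (-(x + c) / (1 + c * x)) ^ 2 = (1 - x ^ 2) * (1 - c ^ 2) / (1 + c * x) ^ 2 := by
    rw [div_pow, one_sub_div (pow_ne_zero 2 hu.ne')]
    ring
  have hc2 : 0 ≤ 1 - c ^ 2 := by nlinarith [hc.1, hc.2]
  rw [hsq, sqrt_div' _ (sq_nonneg _), sqrt_sq hu.le, sqrt_mul' _ hc2]

theorem hasDerivAt_arccos_mobius (hc : c ∈ Ioo (-1) 1) (hx : x ∈ Ioo (-1) 1) :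
    HasDerivAt (fun y => arccos (-(y + c) / (1 + c * y)))
      (√(1 - c ^ 2) / ((1 + c * x) * √(1 - x ^ 2))) x := by
  have hu := one_add_mul_pos hc hx
  have hg := mobius_mem_Ioo hc hx
  have hc2 : 0 < 1 - c ^ 2 := by nlinarith [hc.1, hc.2]
  have hs : 0 < √(1 - x ^ 2) := sqrt_pos.2 (by nlinarith [hx.1, hx.2])
  have ht : 0 < √(1 - c ^ 2) := sqrt_pos.2 hc2
  have ht2 : √(1 - c ^ 2) ^ 2 = 1 - c ^ 2 := sq_sqrt hc2.le
  have hnum : HasDerivAt (fun y => -(y + c)) (-1) x := ((hasDerivAt_id' x).add_const c).neg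
  have hden : HasDerivAt (fun y => 1 + c * y) c x := by
    simpa using ((hasDerivAt_id' x).const_mul c).const_add 1
  refine ((hasDerivAt_arccos hg.1.ne' hg.2.ne).comp x (hnum.div hden hu.ne')).congr_deriv ?_
  rw [sqrt_one_sub_mobius_sq hc hx]
  field_simp
  rw [ht2]
  ring

theorem hasDerivAt_sqrt_one_sub_sq (hx : 1 - x ^ 2 ≠ 0) :
    HasDerivAt (fun y => √(1 - y ^ 2)) (-x / √(1 - x ^ 2)) x := by
  refine ((hasDerivAt_sqrt hx).comp x ((hasDerivAt_pow 2 x).const_sub 1)).congr_deriv ?_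
  field_simp
  ring

theorem hasDerivAt_profile (hc : c ∈ Ioo (-1) 1) (hx : x ∈ Ioo (-1) 1) :
    HasDerivAt (profile c) (profileDeriv c x) x := by
  have hx2 : 0 < 1 - x ^ 2 := by nlinarith [hx.1, hx.2]
  refine ((hasDerivAt_arccos_mobius hc hx).mul
    (hasDerivAt_sqrt_one_sub_sq hx2.ne')).congr_deriv ?_
  unfold profileDeriv
  field_simp
  ring

theorem hasDerivAt_profileDeriv (hc : c ∈ Ioo (-1) 1) (hx : x ∈ Ioo (-1) 1) :
    HasDerivAt (profileDeriv c) (profileDeriv2 c x) x := by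
  have hu := one_add_mul_pos hc hx
  have hx2 : 0 < 1 - x ^ 2 := by nlinarith [hx.1, hx.2]
  have hs : 0 < √(1 - x ^ 2) := sqrt_pos.2 hx2
  have hs2 : √(1 - x ^ 2) ^ 2 = 1 - x ^ 2 := sq_sqrt hx2.le
  have hden : HasDerivAt (fun y => 1 + c * y) c x := by
    simpa using ((hasDerivAt_id' x).const_mul c).const_add 1
  have hfirst : HasDerivAt (fun y => √(1 - c ^ 2) / (1 + c * y))
      ((0 * (1 + c * x) - √(1 - c ^ 2) * c) / (1 + c * x) ^ 2) x :=
    (hasDerivAt_const x (√(1 - c ^ 2))).div hden hu.ne'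
  have hsecond : HasDerivAt (fun y => arccos (-(y + c) / (1 + c * y)) * y / √(1 - y ^ 2))
      (((√(1 - c ^ 2) / ((1 + c * x) * √(1 - x ^ 2)) * x + arccos (-(x + c) / (1 + c * x)) * 1)
          * √(1 - x ^ 2) - arccos (-(x + c) / (1 + c * x)) * x * (-x / √(1 - x ^ 2)))
        / √(1 - x ^ 2) ^ 2) x :=
    ((hasDerivAt_arccos_mobius hc hx).mul (hasDerivAt_id' x)).div
      (hasDerivAt_sqrt_one_sub_sq hx2.ne') hs.ne'
  refine (hfirst.sub hsecond).congr_deriv ?_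
  unfold profileDeriv2
  generalize √(1 - x ^ 2) = s at hs hs2 ⊢
  generalize arccos (-(x + c) / (1 + c * x)) = A
  rw [← hs2, show A / s ^ 3 = A * (s ^ 2 + x ^ 2) / s ^ 3 by rw [hs2]; ring]
  field_simp
  ring

theorem deriv_deriv_profile (hc : c ∈ Ioo (-1) 1) (hx : x ∈ Ioo (-1) 1) :
    deriv (deriv (profile c)) x = profileDeriv2 c x := by
  have hderiv : deriv (profile c) =ᶠ[nhds x] profileDeriv c :=
    Filter.eventually_of_mem (isOpen_Ioo.mem_nhds hx) fun y hy => (hasDerivAt_profile hc hy).deriv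
  rw [hderiv.deriv_eq, (hasDerivAt_profileDeriv hc hx).deriv]

theorem profileDeriv2_neg (hc₀ : 0 ≤ c) (hx₀ : 0 ≤ x) (hx₁ : x < 1) :
    profileDeriv2 c x < 0 := by
  have hu : 0 < 1 + c * x := by positivity
  have hx2 : 0 < 1 - x ^ 2 := by nlinarith
  have harccos : 0 < arccos (-(x + c) / (1 + c * x)) := arccos_pos.2 (by
    rw [div_lt_one hu]
    nlinarith)
  have h₁ : 0 ≤ √(1 - c ^ 2) * c / (1 + c * x) ^ 2 := by positivity
  have h₂ : 0 ≤ √(1 - c ^ 2) * x / ((1 + c * x) * (1 - x ^ 2)) := by positivity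
  have h₃ : 0 < arccos (-(x + c) / (1 + c * x)) / √(1 - x ^ 2) ^ 3 := by positivity
  unfold profileDeriv2
  linarith

theorem eq_mul_profile {lam mu th : ℝ} {N : ℕ} (hN : N ≠ 0) (ha : lam * th ≠ 0)
    (hQ : 0 ≤ (lam * th) ^ 2 - (N * mu) ^ 2) :
    Dcr lam mu th N = fun d => N / √((lam * th) ^ 2 - (N * mu) ^ 2) *
      profile (N * mu / (lam * th)) (lam * th / N * d) := by
  funext d
  have hN' : (N : ℝ) ≠ 0 := Nat.cast_ne_zero.2 hN
  have hlam : lam ≠ 0 := left_ne_zero_of_mul ha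
  have hth : th ≠ 0 := right_ne_zero_of_mul ha
  have hden : N * mu / (lam * th) * (lam * th / N * d) = d * mu := by
    field_simp
  have hnum : lam * th / N * d + N * mu / (lam * th) =
      (d * lam ^ 2 * th ^ 2 + N ^ 2 * mu) / (N * lam * th) := by
    field_simp
  have hrad : (N : ℝ) ^ 2 - d ^ 2 * lam ^ 2 * th ^ 2 = N ^ 2 * (1 - (lam * th / N * d) ^ 2) := by
    field_simp
  unfold Dcr profile
  rw [hden, hnum, hrad, show lam ^ 2 * th ^ 2 - N ^ 2 * mu ^ 2 = (lam * th) ^ 2 - (N * mu) ^ 2 by ring,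
    sqrt_div' _ hQ, sqrt_mul (sq_nonneg _), sqrt_sq (Nat.cast_nonneg N), neg_div, neg_div, div_div]
  ring

end Dcr

theorem Dcr_concave
    (lam mu th : ℝ) (N : ℕ) (hN : 0 < N)
    (hlam : 0 < lam) (hmu : 0 < mu) (hth : 0 < th)
    (hgt : lam * th > N * mu) :
    ConcaveOn ℝ (Set.Ico (0 : ℝ) ((N : ℝ) / (lam * th))) (Dcr lam mu th N)
    ∧ ∀ d ∈ Set.Ico (0 : ℝ) ((N : ℝ) / (lam * th)),
        deriv (deriv (Dcr lam mu th N)) d < 0 := by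
  have hN' : (0 : ℝ) < N := Nat.cast_pos.2 hN
  have ha : 0 < lam * th := mul_pos hlam hth
  have hc₀ : 0 ≤ N * mu / (lam * th) := by positivity
  have hc : N * mu / (lam * th) ∈ Ioo (-1) 1 := ⟨by linarith, (div_lt_one ha).2 hgt⟩
  have hQ : 0 < (lam * th) ^ 2 - (N * mu) ^ 2 := by
    nlinarith [mul_pos (sub_pos.2 hgt) (by positivity : 0 < lam * th + N * mu)]
  have hscale : ∀ d ∈ Ico 0 (N / (lam * th)), lam * th / N * d ∈ Ico 0 1 := fun d hd =>
    ⟨by have := hd.1; positivity, by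
      rw [div_mul_eq_mul_div, div_lt_one hN']
      exact (lt_div_iff₀' ha).1 hd.2⟩
  rw [Dcr.eq_mul_profile hN.ne' ha.ne' hQ.le]
  set K := N / √((lam * th) ^ 2 - (N * mu) ^ 2)
  set c := N * mu / (lam * th)
  set m := lam * th / N
  have hderiv2 : ∀ d ∈ Ico 0 (N / (lam * th)),
      deriv (deriv fun d => K * Dcr.profile c (m * d)) d < 0 := by
    intro d hd
    obtain ⟨hx₀, hx₁⟩ := hscale d hd
    rw [deriv_deriv_const_mul_comp_mul, Dcr.deriv_deriv_profile hc ⟨by linarith, hx₁⟩]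
    exact mul_neg_of_pos_of_neg (by positivity) (Dcr.profileDeriv2_neg hc₀ hx₀ hx₁)
  refine ⟨(strictConcaveOn_of_deriv2_neg (convex_Ico _ _) ?_ fun d hd => ?_).concaveOn, hderiv2⟩
  · intro d hd
    have hx : m * d ∈ Ioo (-1) 1 := ⟨by linarith [(hscale d hd).1], (hscale d hd).2⟩
    exact ((Dcr.hasDerivAt_profile hc hx).continuousAt.comp
      (continuous_const_mul m).continuousAt).const_mul K |>.continuousWithinAt
  · rw [interior_Ico] at hd
    exact hderiv2 d (Ioo_subset_Ico_self hd)
end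

section
/- Assume λθ > Nμ and 0 ≤ δ < N/(λθ). The derivative of Δ_cr(δ) = arccos(-(δλ²θ² + N²μ)/(Nλθ(1+δμ))) · sqrt((N² - δ²λ²θ²)/(λ²θ² - N²μ²)) with respect to δ equals 1/(1+δμ) - δλ²θ²Δ_cr(δ)/(N² - δ²λ²θ²). -/
open Real Set

/-!
Write `L = λθ`, `A = N² - δ²L²` and `B = L² - N²μ²`. The polynomial identity
`(NL(1 + δμ))² - (δL² + N²μ)² = A B` gives `√(1 - c²) = √A √B / (NL(1 + δμ))` for the
argument `c` of `arccos`. Hence the derivative of the `arccos` factor is `√B / ((1 + δμ) √A)`,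
which the square-root factor `√(A / B)` turns into `1 / (1 + δμ)`, while the derivative of the
square-root factor is `-δL² √(A / B) / A`.
-/

namespace Dcr

noncomputable def cosArg (L μ n x : ℝ) : ℝ := -(x * L ^ 2 + n ^ 2 * μ) / (n * L * (1 + x * μ))

noncomputable def radicand (L μ n x : ℝ) : ℝ := (n ^ 2 - x ^ 2 * L ^ 2) / (L ^ 2 - n ^ 2 * μ ^ 2)

/-- `Dcr` depends on `λ` and `θ` only through `L = λθ`. -/
noncomputable def ofL (L μ n x : ℝ) : ℝ := arccos (cosArg L μ n x) * √(radicand L μ n x)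

theorem eq_ofL (lam mu th : ℝ) (N : ℕ) : Dcr lam mu th N = ofL (lam * th) mu N := by
  funext x
  simp only [Dcr, ofL, cosArg, radicand]
  ring_nf

variable {L μ n x : ℝ}

theorem one_sub_cosArg_sq (hC : n * L * (1 + x * μ) ≠ 0) :
    1 - cosArg L μ n x ^ 2
      = (n ^ 2 - x ^ 2 * L ^ 2) * (L ^ 2 - n ^ 2 * μ ^ 2) / (n * L * (1 + x * μ)) ^ 2 := by
  rw [cosArg, div_pow, neg_sq, one_sub_div (pow_ne_zero 2 hC)]
  ring

theorem hasDerivAt_cosArg (hC : n * L * (1 + x * μ) ≠ 0) :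
    HasDerivAt (cosArg L μ n) (-(L ^ 2 - n ^ 2 * μ ^ 2) / (n * L * (1 + x * μ) ^ 2)) x := by
  have hnum : HasDerivAt (fun y => -(y * L ^ 2 + n ^ 2 * μ)) (-(1 * L ^ 2)) x :=
    (((hasDerivAt_id x).mul_const _).add_const _).neg
  have hden : HasDerivAt (fun y => n * L * (1 + y * μ)) (n * L * (1 * μ)) x :=
    (((hasDerivAt_id x).mul_const μ).const_add 1).const_mul _
  refine (hnum.div hden hC).congr_deriv ?_
  field_simp
  ring

theorem hasDerivAt_arccos_cosArg (hA : 0 < n ^ 2 - x ^ 2 * L ^ 2) (hB : 0 < L ^ 2 - n ^ 2 * μ ^ 2)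
    (hnL : 0 < n * L) (hx : 0 < 1 + x * μ) :
    HasDerivAt (fun y => arccos (cosArg L μ n y))
      (√(L ^ 2 - n ^ 2 * μ ^ 2) / ((1 + x * μ) * √(n ^ 2 - x ^ 2 * L ^ 2))) x := by
  have hC : 0 < n * L * (1 + x * μ) := mul_pos hnL hx
  have hsq : 0 < 1 - cosArg L μ n x ^ 2 := by
    rw [one_sub_cosArg_sq hC.ne']; positivity
  obtain ⟨hm1, h1⟩ := abs_lt.1 ((sq_lt_one_iff_abs_lt_one (cosArg L μ n x)).1 (by linarith))
  refine ((hasDerivAt_arccos hm1.ne' h1.ne).comp x (hasDerivAt_cosArg hC.ne')).congr_deriv ?_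
  rw [one_sub_cosArg_sq hC.ne', sqrt_div' _ (sq_nonneg _), sqrt_sq hC.le, sqrt_mul hA.le]
  have : 0 < √(n ^ 2 - x ^ 2 * L ^ 2) := sqrt_pos.2 hA
  have : 0 < √(L ^ 2 - n ^ 2 * μ ^ 2) := sqrt_pos.2 hB
  field_simp
  rw [sq_sqrt hB.le]
  field_simp
  exact div_self hnL.ne'

theorem hasDerivAt_sqrt_radicand (hA : 0 < n ^ 2 - x ^ 2 * L ^ 2)
    (hB : 0 < L ^ 2 - n ^ 2 * μ ^ 2) :
    HasDerivAt (fun y => √(radicand L μ n y))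
      (-(x * L ^ 2) * √(radicand L μ n x) / (n ^ 2 - x ^ 2 * L ^ 2)) x := by
  have hq : HasDerivAt (radicand L μ n) (-(2 * x * L ^ 2) / (L ^ 2 - n ^ 2 * μ ^ 2)) x :=
    ((((hasDerivAt_pow 2 x).mul_const _).const_sub _).div_const _).congr_deriv (by norm_num)
  have hq0 : 0 < radicand L μ n x := div_pos hA hB
  have hsq : √(radicand L μ n x) ^ 2 = (n ^ 2 - x ^ 2 * L ^ 2) / (L ^ 2 - n ^ 2 * μ ^ 2) :=
    sq_sqrt hq0.le
  have hs : 0 < √(radicand L μ n x) := sqrt_pos.2 hq0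
  refine (hq.sqrt hq0.ne').congr_deriv ?_
  set A := n ^ 2 - x ^ 2 * L ^ 2
  set B := L ^ 2 - n ^ 2 * μ ^ 2
  field_simp
  rw [hsq]
  field_simp

theorem hasDerivAt_ofL (hn : 0 ≤ n) (hx : 0 ≤ x) (hμ : 0 ≤ μ) (hxn : x * L < n) (hnμ : n * μ < L) :
    HasDerivAt (ofL L μ n)
      (1 / (1 + x * μ) - x * L ^ 2 * ofL L μ n x / (n ^ 2 - x ^ 2 * L ^ 2)) x := by
  have hL : 0 < L := lt_of_le_of_lt (by positivity) hnμ
  have hA : 0 < n ^ 2 - x ^ 2 * L ^ 2 := by nlinarith [mul_nonneg hx hL.le]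
  have hB : 0 < L ^ 2 - n ^ 2 * μ ^ 2 := by nlinarith [mul_nonneg hn hμ]
  have hnL : 0 < n * L := mul_pos (by nlinarith [mul_nonneg hx hL.le]) hL
  refine ((hasDerivAt_arccos_cosArg hA hB hnL (by positivity)).mul
    (hasDerivAt_sqrt_radicand hA hB)).congr_deriv ?_
  have hcancel : √(L ^ 2 - n ^ 2 * μ ^ 2) / ((1 + x * μ) * √(n ^ 2 - x ^ 2 * L ^ 2))
      * √(radicand L μ n x) = 1 / (1 + x * μ) := by
    have : 0 < √(n ^ 2 - x ^ 2 * L ^ 2) := sqrt_pos.2 hA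
    have : 0 < √(L ^ 2 - n ^ 2 * μ ^ 2) := sqrt_pos.2 hB
    rw [radicand, sqrt_div hA.le]
    set A := n ^ 2 - x ^ 2 * L ^ 2
    field_simp
  rw [hcancel, ofL]
  ring

end Dcr

theorem Dcr_deriv_formula_general
    (lam mu th : ℝ) (N : ℕ)
    (hmu : 0 < mu)
    (hgt : lam * th > N * mu) :
    ∀ d ∈ Set.Ico (0 : ℝ) ((N : ℝ) / (lam * th)),
      deriv (Dcr lam mu th N) d
        = 1 / (1 + d * mu)
          - d * lam^2 * th^2 * Dcr lam mu th N d / ((N : ℝ)^2 - d^2 * lam^2 * th^2) := by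
  rintro d ⟨hd, hdN⟩
  have hL : 0 < lam * th := lt_of_le_of_lt (by positivity) hgt
  rw [Dcr.eq_ofL, (Dcr.hasDerivAt_ofL N.cast_nonneg hd hmu.le ((lt_div_iff₀ hL).1 hdN) hgt).deriv]
  ring

theorem Dcr_deriv_formula
    (lam mu th : ℝ) (N : ℕ) (hN : 0 < N)
    (hlam : 0 < lam) (hmu : 0 < mu) (hth : 0 < th)
    (hgt : lam * th > N * mu) :
    ∀ d ∈ Set.Ico (0 : ℝ) ((N : ℝ) / (lam * th)),
      deriv (Dcr lam mu th N) d
        = 1 / (1 + d * mu)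
          - d * lam^2 * th^2 * Dcr lam mu th N d / ((N : ℝ)^2 - d^2 * lam^2 * th^2) :=
  Dcr_deriv_formula_general lam mu th N hmu hgt
end

section
/- Assume λθ > Nμ. Let Δ₀ = arccos(-Nμ/(λθ))·sqrt(N²/(λ²θ² - N²μ²)). If δ* ∈ (0, N/(λθ)) satisfies 1/(1+δ*μ) = δ*λ²θ²Δ_cr(δ*)/(N² - δ*²λ²θ²), then δ* < δ₂, where δ₂ = (-Δ₀λθ + sqrt(λ²θ²Δ₀² + 4N²Δ₀μ + 4N²))/(2λθ(1 + Δ₀μ)). -/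
/-!
Write `Dcr d = arccos (c d) * √(r d)` with `c = dcrCos`, `r = dcrRad`. Since `1 - c d ^ 2` is a
square times `r d`, the derivative of `Dcr` is `1 / (1 + dμ) - dλ²θ² Dcr d / (N² - d²λ²θ²)`,
and the critical equation says precisely that this vanishes at `δ*`. Rewritten as
`1 / (1 + dμ) - dλ²θ² arccos (c d) / ((λ²θ² - N²μ²) √(r d))`, the derivative is strictly
decreasing on `[0, N / (λθ))` because `c` and `r` decrease there. Hence `Dcr` increases on
`[0, δ*]`, so `Δ₀ = Dcr 0 < Dcr δ*`, and the critical equation turns into the quadratic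
inequality `δ*²λ²θ² + δ*λ²θ² Δ₀ (1 + δ*μ) < N²`, whose positive root is `δ₂`.
-/

open Real Set

theorem lt_neg_add_sqrt_div_of_mul_sq_add_mul_lt {a b c x : ℝ} (ha : 0 < a)
    (h : a * x ^ 2 + b * x < c) : x < (-b + √(b ^ 2 + 4 * a * c)) / (2 * a) := by
  have hsq : (2 * a * x + b) ^ 2 < b ^ 2 + 4 * a * c := by nlinarith
  rw [lt_div_iff₀ (by positivity)]
  linarith [Real.lt_sqrt_of_sq_lt hsq]

noncomputable def dcrCos (lam mu th : ℝ) (N : ℕ) (d : ℝ) : ℝ :=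
  -(d * lam^2 * th^2 + (N : ℝ)^2 * mu) / ((N : ℝ) * lam * th * (1 + d * mu))

noncomputable def dcrRad (lam mu th : ℝ) (N : ℕ) (d : ℝ) : ℝ :=
  ((N : ℝ)^2 - d^2 * lam^2 * th^2) / (lam^2 * th^2 - (N : ℝ)^2 * mu^2)

noncomputable def dcrDeriv (lam mu th : ℝ) (N : ℕ) (d : ℝ) : ℝ :=
  1 / (1 + d * mu) - d * lam^2 * th^2 * Dcr lam mu th N d / ((N : ℝ)^2 - d^2 * lam^2 * th^2)

section

variable {lam mu th d : ℝ} {N : ℕ}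

theorem Dcr_eq_arccos_mul_sqrt :
    Dcr lam mu th N d = arccos (dcrCos lam mu th N d) * √(dcrRad lam mu th N d) := rfl

theorem dcrRad_num_pos (hlam : 0 < lam) (hth : 0 < th) (hd : d ∈ Ico 0 (N / (lam * th))) :
    0 < (N : ℝ)^2 - d^2 * lam^2 * th^2 := by
  have hdN : d * (lam * th) < N := (lt_div_iff₀ (by positivity)).1 hd.2
  nlinarith [hd.1, mul_nonneg hd.1 (mul_pos hlam hth).le]

theorem dcrRad_den_pos (hmu : 0 ≤ mu) (hgt : lam * th > N * mu) :
    0 < lam^2 * th^2 - (N : ℝ)^2 * mu^2 := by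
  have : 0 ≤ (N : ℝ) * mu := by positivity
  nlinarith

theorem dcrRad_pos (hlam : 0 < lam) (hmu : 0 ≤ mu) (hth : 0 < th) (hgt : lam * th > N * mu)
    (hd : d ∈ Ico 0 (N / (lam * th))) : 0 < dcrRad lam mu th N d :=
  div_pos (dcrRad_num_pos hlam hth hd) (dcrRad_den_pos hmu hgt)

theorem one_sub_dcrCos_sq (hN : (N : ℝ) ≠ 0) (hlam : lam ≠ 0) (hth : th ≠ 0)
    (hd : 1 + d * mu ≠ 0) :
    1 - dcrCos lam mu th N d ^ 2 =
      ((lam^2 * th^2 - (N : ℝ)^2 * mu^2) / ((N : ℝ) * lam * th * (1 + d * mu)))^2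
        * dcrRad lam mu th N d := by
  unfold dcrCos dcrRad
  field_simp
  ring

theorem hasDerivAt_dcrCos (hN : (N : ℝ) ≠ 0) (hlam : lam ≠ 0) (hth : th ≠ 0)
    (hd : 1 + d * mu ≠ 0) :
    HasDerivAt (dcrCos lam mu th N)
      (-(lam^2 * th^2 - (N : ℝ)^2 * mu^2) / ((N : ℝ) * lam * th * (1 + d * mu)^2)) d := by
  have hnum : HasDerivAt (fun x : ℝ => -(x * lam^2 * th^2 + (N : ℝ)^2 * mu))
      (-(lam^2 * th^2)) d :=
    ((((hasDerivAt_id d).mul_const (lam^2)).mul_const (th^2)).add_const _).neg.congr_deriv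
      (by ring)
  have hden : HasDerivAt (fun x : ℝ => (N : ℝ) * lam * th * (1 + x * mu))
      ((N : ℝ) * lam * th * mu) d := by
    simpa using (((hasDerivAt_id d).mul_const mu).const_add 1).const_mul ((N : ℝ) * lam * th)
  refine (hnum.div hden (by positivity)).congr_deriv ?_
  field_simp
  ring

theorem hasDerivAt_dcrRad :
    HasDerivAt (dcrRad lam mu th N)
      (-(2 * d * lam^2 * th^2) / (lam^2 * th^2 - (N : ℝ)^2 * mu^2)) d := by
  have := ((((hasDerivAt_pow 2 d).mul_const (lam^2)).mul_const (th^2)).const_sub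
    ((N : ℝ)^2)).div_const (lam^2 * th^2 - (N : ℝ)^2 * mu^2)
  exact this.congr_deriv (by ring)

theorem dcrDeriv_eq (hK : lam^2 * th^2 - (N : ℝ)^2 * mu^2 ≠ 0) (hq : 0 < dcrRad lam mu th N d) :
    dcrDeriv lam mu th N d = 1 / (1 + d * mu) - d * lam^2 * th^2 * arccos (dcrCos lam mu th N d)
      / ((lam^2 * th^2 - (N : ℝ)^2 * mu^2) * √(dcrRad lam mu th N d)) := by
  have hnum : (N : ℝ)^2 - d^2 * lam^2 * th^2
      = (lam^2 * th^2 - (N : ℝ)^2 * mu^2) * √(dcrRad lam mu th N d) ^ 2 := by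
    rw [sq_sqrt hq.le, dcrRad]
    field_simp
  rw [dcrDeriv, Dcr_eq_arccos_mul_sqrt, hnum]
  field_simp

theorem hasDerivAt_Dcr (hN : 0 < N) (hlam : 0 < lam) (hmu : 0 ≤ mu) (hth : 0 < th)
    (hgt : lam * th > N * mu) (hd : d ∈ Ico 0 (N / (lam * th))) :
    HasDerivAt (Dcr lam mu th N) (dcrDeriv lam mu th N d) d := by
  have hN' : (0 : ℝ) < N := Nat.cast_pos.2 hN
  have h1 : 0 < 1 + d * mu := by nlinarith [mul_nonneg hd.1 hmu]
  have hK := dcrRad_den_pos hmu hgt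
  have hq := dcrRad_pos hlam hmu hth hgt hd
  -- `√(1 - c²)` cancels against `c'`, leaving `(arccos ∘ c)' = 1 / ((1 + dμ) √r)`.
  have hsq : √(1 - dcrCos lam mu th N d ^ 2)
      = (lam^2 * th^2 - (N : ℝ)^2 * mu^2) * √(dcrRad lam mu th N d)
          / ((N : ℝ) * lam * th * (1 + d * mu)) := by
    rw [one_sub_dcrCos_sq hN'.ne' hlam.ne' hth.ne' h1.ne', sqrt_mul (sq_nonneg _),
      sqrt_sq (by positivity)]
    ring
  have hcos : dcrCos lam mu th N d ^ 2 < 1 := by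
    have : 0 < √(1 - dcrCos lam mu th N d ^ 2) := by rw [hsq]; positivity
    linarith [sqrt_pos.1 this]
  obtain ⟨hcos₁, hcos₂⟩ := abs_lt.1 ((sq_lt_one_iff_abs_lt_one _).1 hcos)
  have := ((hasDerivAt_arccos hcos₁.ne' hcos₂.ne).comp d
    (hasDerivAt_dcrCos hN'.ne' hlam.ne' hth.ne' h1.ne')).mul (hasDerivAt_dcrRad.sqrt hq.ne')
  refine this.congr_deriv ?_
  rw [Function.comp_apply, dcrDeriv_eq hK.ne' hq, hsq]
  field_simp
  ring

theorem antitoneOn_dcrCos (hN : 0 < N) (hlam : 0 < lam) (hmu : 0 ≤ mu) (hth : 0 < th)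
    (hgt : lam * th > N * mu) : AntitoneOn (dcrCos lam mu th N) (Ici 0) := by
  intro x hx y hy hxy
  have hN' : (0 : ℝ) < N := Nat.cast_pos.2 hN
  have hx1 : 0 < 1 + x * mu := by nlinarith [mul_nonneg (mem_Ici.1 hx) hmu]
  have hy1 : 0 < 1 + y * mu := by nlinarith [mul_nonneg (mem_Ici.1 hy) hmu]
  rw [dcrCos, dcrCos, div_le_div_iff₀ (by positivity) (by positivity)]
  nlinarith [mul_nonneg (mul_nonneg (mul_pos (mul_pos hN' hlam) hth).le (sub_nonneg.2 hxy))
    (dcrRad_den_pos hmu hgt).le]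

theorem strictAntiOn_dcrDeriv (hN : 0 < N) (hlam : 0 < lam) (hmu : 0 < mu) (hth : 0 < th)
    (hgt : lam * th > N * mu) : StrictAntiOn (dcrDeriv lam mu th N) (Ico 0 (N / (lam * th))) := by
  intro x hx y hy hxy
  have hK := dcrRad_den_pos hmu.le hgt
  have hqy := dcrRad_pos hlam hmu.le hth hgt hy
  rw [dcrDeriv_eq hK.ne' (dcrRad_pos hlam hmu.le hth hgt hx), dcrDeriv_eq hK.ne' hqy]
  have hrecip : 1 / (1 + y * mu) < 1 / (1 + x * mu) :=
    one_div_lt_one_div_of_lt (by nlinarith [mul_nonneg hx.1 hmu.le]) (by nlinarith)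
  have harccos : arccos (dcrCos lam mu th N x) ≤ arccos (dcrCos lam mu th N y) :=
    arccos_le_arccos (antitoneOn_dcrCos hN hlam hmu.le hth hgt hx.1 hy.1 hxy.le)
  have hsqrt : √(dcrRad lam mu th N y) ≤ √(dcrRad lam mu th N x) := by
    gcongr
    unfold dcrRad
    gcongr
    nlinarith [hx.1]
  have hterm : x * lam^2 * th^2 * arccos (dcrCos lam mu th N x)
        / ((lam^2 * th^2 - (N : ℝ)^2 * mu^2) * √(dcrRad lam mu th N x))
      ≤ y * lam^2 * th^2 * arccos (dcrCos lam mu th N y)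
        / ((lam^2 * th^2 - (N : ℝ)^2 * mu^2) * √(dcrRad lam mu th N y)) := by
    have := hx.1; have := hy.1; have := hxy.le
    have := arccos_nonneg (dcrCos lam mu th N x); have := arccos_nonneg (dcrCos lam mu th N y)
    have := mul_pos hK (sqrt_pos.2 hqy)
    gcongr
  linarith

theorem Dcr_zero_lt_of_dcrDeriv_eq_zero (hN : 0 < N) (hlam : 0 < lam) (hmu : 0 < mu)
    (hth : 0 < th) (hgt : lam * th > N * mu) (hd : d ∈ Ioo 0 (N / (lam * th)))
    (hcrit : dcrDeriv lam mu th N d = 0) : Dcr lam mu th N 0 < Dcr lam mu th N d := by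
  have hsub : Icc 0 d ⊆ Ico 0 (N / (lam * th)) := Icc_subset_Ico_right hd.2
  have hderiv (x) (hx : x ∈ Icc 0 d) := hasDerivAt_Dcr hN hlam hmu.le hth hgt (hsub hx)
  have hmono : StrictMonoOn (Dcr lam mu th N) (Icc 0 d) := by
    refine strictMonoOn_of_deriv_pos (convex_Icc 0 d)
      (fun x hx => (hderiv x hx).continuousAt.continuousWithinAt) fun x hx => ?_
    rw [interior_Icc] at hx
    rw [(hderiv x (Ioo_subset_Icc_self hx)).deriv, ← hcrit]
    exact strictAntiOn_dcrDeriv hN hlam hmu hth hgt (hsub (Ioo_subset_Icc_self hx))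
      (hsub (right_mem_Icc.2 hd.1.le)) hx.2
  exact hmono (left_mem_Icc.2 hd.1.le) (right_mem_Icc.2 hd.1.le) hd.1

theorem Dcr_zero (hN : (N : ℝ) ≠ 0) :
    Dcr lam mu th N 0 = arccos (-((N : ℝ) * mu) / (lam * th))
      * √((N : ℝ)^2 / (lam^2 * th^2 - (N : ℝ)^2 * mu^2)) := by
  unfold Dcr
  congr 2
  · field_simp
    ring
  · simp

end

theorem dmax_upper_bound
    (lam mu th : ℝ) (N : ℕ) (hN : 0 < N)
    (hlam : 0 < lam) (hmu : 0 < mu) (hth : 0 < th)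
    (hgt : lam * th > N * mu)
    (dstar : ℝ) (hdstar : dstar ∈ Set.Ioo (0 : ℝ) ((N : ℝ) / (lam * th)))
    (hcrit : 1 / (1 + dstar * mu)
        = dstar * lam^2 * th^2 * Dcr lam mu th N dstar
          / ((N : ℝ)^2 - dstar^2 * lam^2 * th^2)) :
    dstar <
      (-(Real.arccos (-((N : ℝ) * mu) / (lam * th)) *
            Real.sqrt ((N : ℝ)^2 / (lam^2 * th^2 - (N : ℝ)^2 * mu^2))) * lam * th
        + Real.sqrt (lam^2 * th^2 *
              (Real.arccos (-((N : ℝ) * mu) / (lam * th)) *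
                Real.sqrt ((N : ℝ)^2 / (lam^2 * th^2 - (N : ℝ)^2 * mu^2)))^2
            + 4 * (N : ℝ)^2 * (Real.arccos (-((N : ℝ) * mu) / (lam * th)) *
                Real.sqrt ((N : ℝ)^2 / (lam^2 * th^2 - (N : ℝ)^2 * mu^2))) * mu
            + 4 * (N : ℝ)^2))
      / (2 * lam * th * (1 + (Real.arccos (-((N : ℝ) * mu) / (lam * th)) *
            Real.sqrt ((N : ℝ)^2 / (lam^2 * th^2 - (N : ℝ)^2 * mu^2))) * mu)) := by
  have hN' : (0 : ℝ) < N := Nat.cast_pos.2 hN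
  have hd0 : 0 < dstar := hdstar.1
  have hd1 : 0 < 1 + dstar * mu := by positivity
  have hnum := dcrRad_num_pos hlam hth (Ioo_subset_Ico_self hdstar)
  have hlt := Dcr_zero_lt_of_dcrDeriv_eq_zero hN hlam hmu hth hgt hdstar (sub_eq_zero.2 hcrit)
  rw [← Dcr_zero hN'.ne']
  set D₀ := Dcr lam mu th N 0
  have hD₀ : 0 ≤ D₀ := mul_nonneg (arccos_nonneg _) (sqrt_nonneg _)
  rw [div_eq_div_iff hd1.ne' hnum.ne'] at hcrit
  have hquad : lam * th * (1 + D₀ * mu) * dstar ^ 2 + D₀ * lam * th * dstar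
      < N ^ 2 / (lam * th) := by
    rw [lt_div_iff₀ (by positivity)]
    nlinarith [mul_lt_mul_of_pos_left hlt
      (by positivity : 0 < dstar * lam^2 * th^2 * (1 + dstar * mu))]
  have hroot := lt_neg_add_sqrt_div_of_mul_sq_add_mul_lt (by positivity) hquad
  have hdisc : (D₀ * lam * th) ^ 2 + 4 * (lam * th * (1 + D₀ * mu)) * (N ^ 2 / (lam * th))
      = lam^2 * th^2 * D₀^2 + 4 * (N : ℝ)^2 * D₀ * mu + 4 * (N : ℝ)^2 := by
    field_simp
    ring
  rw [hdisc] at hroot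
  convert hroot using 2 <;> ring
end

section
/- Assume λθ > Nμ. If δ* ∈ (0, N/(λθ)) satisfies 1/(1+δ*μ) = δ*λ²θ²Δ_cr(δ*)/(N² - δ*²λ²θ²), then δ* > δ₁, where δ₁ = (-(Δ₀ + N/(λθ))λθ + sqrt(λ²θ²(Δ₀ + N/(λθ))² + 4N²(Δ₀ + N/(λθ))μ + 4N²))/(2λθ(1 + (Δ₀ + N/(λθ))μ)) and Δ₀ = arccos(-Nμ/(λθ))·sqrt(N²/(λ²θ² - N²μ²)). -/
open Real Set

noncomputable def Delta0 (lam mu th : ℝ) (N : ℕ) : ℝ :=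
  Real.arccos (-((N : ℝ) * mu) / (lam * th)) *
    Real.sqrt ((N : ℝ)^2 / (lam^2 * th^2 - (N : ℝ)^2 * mu^2))

/-!
In the variables `k = Nμ/(λθ)` and `r = δλθ/N`, both in `[0, 1)`, the bound
`Δ_cr(δ) ≤ Δ₀ + δ` becomes
`arccos (-(r + k)/(1 + r k)) · √(1 - r²) ≤ arccos (-k) + r √(1 - k²)`,
which follows from the mean value theorem for `arcsin` between `k` and `(r + k)/(1 + r k)`.
Since `δ* < N/(λθ)`, the critical equation then gives
`N² - δ*²λ²θ² < (1 + δ*μ) δ* λ²θ² (Δ₀ + N/(λθ))`: the quadratic whose positive root is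
`δ₁` is positive at `δ*`, so `δ* > δ₁`.
-/

lemma arcsin_sub_arcsin_le {x y : ℝ} (hx : -y ≤ x) (hxy : x ≤ y) (hy : y < 1) :
    arcsin y - arcsin x ≤ (y - x) / √(1 - y ^ 2) := by
  have hy2 : 0 < 1 - y ^ 2 := by nlinarith
  rw [div_eq_mul_one_div, mul_comm]
  refine (convex_Icc x y).image_sub_le_mul_sub_of_deriv_le continuous_arcsin.continuousOn
    (fun z hz => ?_) (fun z hz => ?_) x (left_mem_Icc.2 hxy) y (right_mem_Icc.2 hxy) hxy
  · rw [interior_Icc] at hz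
    exact (differentiableAt_arcsin.2
      ⟨by linarith [hz.1], by linarith [hz.2]⟩).differentiableWithinAt
  · rw [interior_Icc] at hz
    rw [deriv_arcsin]
    have hz2 : 1 - y ^ 2 ≤ 1 - z ^ 2 := by nlinarith [hz.1, hz.2]
    exact one_div_le_one_div_of_le (sqrt_pos.2 hy2) (sqrt_le_sqrt hz2)

lemma arccos_neg_mul_sqrt_le {r k : ℝ} (hr : 0 ≤ r) (hr1 : r < 1) (hk : 0 ≤ k) (hk1 : k < 1) :
    arccos (-((r + k) / (1 + r * k))) * √(1 - r ^ 2) ≤ arccos (-k) + r * √(1 - k ^ 2) := by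
  have hd : 0 < 1 + r * k := by positivity
  set c := (r + k) / (1 + r * k) with hc
  have hkc : k ≤ c := by
    rw [hc, le_div_iff₀ hd]; nlinarith [mul_nonneg hr (show 0 ≤ 1 - k ^ 2 by nlinarith)]
  have hc1 : c < 1 := by
    rw [hc, div_lt_one hd]; nlinarith [mul_pos (sub_pos.2 hr1) (sub_pos.2 hk1)]
  have hsqrt : √(1 - c ^ 2) = √(1 - r ^ 2) * √(1 - k ^ 2) / (1 + r * k) := by
    have : 1 - c ^ 2 = (1 - r ^ 2) * (1 - k ^ 2) / (1 + r * k) ^ 2 := by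
      rw [hc]; field_simp; ring
    rw [this, sqrt_div' _ (sq_nonneg _), sqrt_mul (by nlinarith), sqrt_sq hd.le]
  have hr2 : 0 < √(1 - r ^ 2) := sqrt_pos.2 (by nlinarith)
  have hk2 : 0 < √(1 - k ^ 2) := sqrt_pos.2 (by nlinarith)
  have hslope : (c - k) / √(1 - c ^ 2) = r * √(1 - k ^ 2) / √(1 - r ^ 2) := by
    rw [hsqrt, hc]
    field_simp
    rw [sq_sqrt (by nlinarith)]
    ring
  have harcsin := arcsin_sub_arcsin_le (by linarith) hkc hc1
  rw [hslope, le_div_iff₀ hr2] at harcsin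
  have harccos_neg : ∀ x, arccos (-x) = π / 2 + arcsin x := fun x => by
    rw [arccos_neg, arccos_eq_pi_div_two_sub_arcsin]; ring
  have hr3 : √(1 - r ^ 2) ≤ 1 := sqrt_le_one.2 (by nlinarith)
  rw [harccos_neg, harccos_neg]
  nlinarith [arcsin_le_pi_div_two k, neg_pi_div_two_le_arcsin k]

lemma neg_add_sqrt_discrim_div_lt {a b c x : ℝ} (ha : 0 < a) (hx : -b < 2 * a * x)
    (h : 0 < a * x ^ 2 + b * x + c) : (-b + √(discrim a b c)) / (2 * a) < x := by
  rw [div_lt_iff₀ (by positivity), discrim]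
  have : √(b ^ 2 - 4 * a * c) < 2 * a * x + b := by
    rw [sqrt_lt' (by linarith)]
    nlinarith
  linarith

section Scaling

variable {lam mu th : ℝ} {N : ℕ} {k : ℝ}

lemma sq_sub_sq_eq_of_scaled (hk : N * mu = k * (lam * th)) :
    lam ^ 2 * th ^ 2 - (N : ℝ) ^ 2 * mu ^ 2 = (lam * th) ^ 2 * (1 - k ^ 2) := by
  linear_combination (-(N * mu) - k * (lam * th)) * hk

lemma Delta0_eq_of_scaled (hA : 0 < lam * th) (hk : N * mu = k * (lam * th)) :
    Delta0 lam mu th N = N / (lam * th) * (arccos (-k) / √(1 - k ^ 2)) := by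
  have harg : -(N * mu) / (lam * th) = -k := by rw [neg_div, hk, mul_div_cancel_right₀ _ hA.ne']
  rw [Delta0, harg, sq_sub_sq_eq_of_scaled hk, sqrt_div (sq_nonneg _), sqrt_mul (sq_nonneg _),
    sqrt_sq (Nat.cast_nonneg N), sqrt_sq hA.le]
  field_simp

lemma Dcr_eq_of_scaled (hN : 0 < N) (hA : 0 < lam * th) (hk : N * mu = k * (lam * th))
    (hk1 : k ^ 2 ≤ 1) {d r : ℝ} (hr : d * (lam * th) = r * N) :
    Dcr lam mu th N d
      = N / (lam * th) * (arccos (-((r + k) / (1 + r * k))) * √(1 - r ^ 2) / √(1 - k ^ 2)) := by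
  have hNA : (N : ℝ) * (lam * th) ≠ 0 := mul_ne_zero (Nat.cast_ne_zero.2 hN.ne') hA.ne'
  have harg : -(d * lam ^ 2 * th ^ 2 + N ^ 2 * mu) / (N * lam * th * (1 + d * mu))
      = -((r + k) / (1 + r * k)) := by
    have hdmu : d * mu = r * k := by
      apply mul_left_cancel₀ hNA
      linear_combination (N : ℝ) * mu * hr + r * N * hk
    rw [neg_div, hdmu, ← mul_div_mul_left (r + k) _ hNA]
    congr 2
    · linear_combination (lam * th) * hr + N * hk
    · ring
  have hnum : (N : ℝ) ^ 2 - d ^ 2 * lam ^ 2 * th ^ 2 = N ^ 2 * (1 - r ^ 2) := by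
    linear_combination (-(d * (lam * th)) - r * N) * hr
  rw [Dcr, harg, hnum, sq_sub_sq_eq_of_scaled hk, sqrt_div' _ (by positivity),
    sqrt_mul (sq_nonneg _), sqrt_mul (sq_nonneg _), sqrt_sq (Nat.cast_nonneg N), sqrt_sq hA.le]
  field_simp

lemma Dcr_le_Delta0_add (hN : 0 < N) (hA : 0 < lam * th) (hmu : 0 ≤ mu)
    (hk : N * mu < lam * th) {d : ℝ} (hd0 : 0 ≤ d) (hd1 : d < N / (lam * th)) :
    Dcr lam mu th N d ≤ Delta0 lam mu th N + d := by
  have hN' : (0 : ℝ) < N := Nat.cast_pos.2 hN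
  set k := N * mu / (lam * th) with hk_def
  set r := d * (lam * th) / N with hr_def
  have hk' : N * mu = k * (lam * th) := by rw [hk_def, div_mul_cancel₀ _ hA.ne']
  have hr' : d * (lam * th) = r * N := by rw [hr_def, div_mul_cancel₀ _ hN'.ne']
  have hk0 : 0 ≤ k := by positivity
  have hk1 : k < 1 := by rwa [hk_def, div_lt_one hA]
  have hr0 : 0 ≤ r := by positivity
  have hr1 : r < 1 := by rwa [hr_def, div_lt_one hN', ← lt_div_iff₀ hA]
  have hd : d = N / (lam * th) * r := by
    rw [div_mul_eq_mul_div, eq_div_iff hA.ne']; linarith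
  have hsk : 0 < √(1 - k ^ 2) := sqrt_pos.2 (by nlinarith)
  rw [Dcr_eq_of_scaled hN hA hk' (by nlinarith) hr', Delta0_eq_of_scaled hA hk', hd, ← mul_add]
  gcongr
  rw [div_add' _ _ _ hsk.ne']
  gcongr
  exact arccos_neg_mul_sqrt_le hr0 hr1 hk0 hk1

end Scaling

lemma quadratic_pos_of_critical {lam mu th D B d : ℝ} {N : ℕ} (hA : 0 < lam * th)
    (hmu : 0 ≤ mu) (hd0 : 0 < d) (hd1 : d < N / (lam * th))
    (hcrit : 1 / (1 + d * mu)
      = d * lam ^ 2 * th ^ 2 * D / ((N : ℝ) ^ 2 - d ^ 2 * lam ^ 2 * th ^ 2))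
    (hDB : D < B) :
    0 < lam * th * (1 + B * mu) * d ^ 2 + lam * th * B * d + -(N : ℝ) ^ 2 / (lam * th) := by
  have hdmu : 0 < 1 + d * mu := by positivity
  have hpos : 0 < (N : ℝ) ^ 2 - d ^ 2 * lam ^ 2 * th ^ 2 := by
    rw [lt_div_iff₀ hA] at hd1
    nlinarith [mul_pos (sub_pos.2 hd1) (by positivity : 0 < N + d * (lam * th))]
  rw [div_eq_div_iff hdmu.ne' hpos.ne'] at hcrit
  have hlt := mul_lt_mul_of_pos_left hDB (by positivity : 0 < (1 + d * mu) * d * (lam * th) ^ 2)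
  have hquad : lam * th * (1 + B * mu) * d ^ 2 + lam * th * B * d + -(N : ℝ) ^ 2 / (lam * th)
      = ((1 + d * mu) * d * (lam * th) ^ 2 * B - (N ^ 2 - d ^ 2 * lam ^ 2 * th ^ 2))
        / (lam * th) := by
    field_simp; ring
  rw [hquad]
  exact div_pos (by linarith) hA

theorem dmax_lower_bound
    (lam mu th : ℝ) (N : ℕ) (hN : 0 < N)
    (hlam : 0 < lam) (hmu : 0 < mu) (hth : 0 < th)
    (hgt : lam * th > N * mu)
    (dstar : ℝ) (hdstar : dstar ∈ Set.Ioo (0 : ℝ) ((N : ℝ) / (lam * th)))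
    (hcrit : 1 / (1 + dstar * mu)
        = dstar * lam^2 * th^2 * Dcr lam mu th N dstar
          / ((N : ℝ)^2 - dstar^2 * lam^2 * th^2)) :
    dstar >
      (-((Delta0 lam mu th N + (N : ℝ) / (lam * th)) * lam * th)
        + Real.sqrt (lam^2 * th^2 * (Delta0 lam mu th N + (N : ℝ) / (lam * th))^2
            + 4 * (N : ℝ)^2 * (Delta0 lam mu th N + (N : ℝ) / (lam * th)) * mu
            + 4 * (N : ℝ)^2))
      / (2 * lam * th * (1 + (Delta0 lam mu th N + (N : ℝ) / (lam * th)) * mu)) := by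
  obtain ⟨hd0, hd1⟩ := hdstar
  have hA : 0 < lam * th := mul_pos hlam hth
  set B := Delta0 lam mu th N + N / (lam * th)
  have hB : 0 < B := add_pos_of_nonneg_of_pos
    (mul_nonneg (arccos_nonneg _) (sqrt_nonneg _)) (div_pos (Nat.cast_pos.2 hN) hA)
  have hDcr : Dcr lam mu th N dstar < B :=
    (Dcr_le_Delta0_add hN hA hmu.le hgt hd0.le hd1).trans_lt (by simpa [B] using hd1)
  have hroot := neg_add_sqrt_discrim_div_lt (by positivity)
    (by nlinarith [mul_pos (mul_pos hA (by positivity : 0 < 1 + B * mu)) hd0, mul_pos hA hB])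
    (quadratic_pos_of_critical hA hmu.le hd0 hd1 hcrit hDcr)
  have hdisc : discrim (lam * th * (1 + B * mu)) (lam * th * B) (-(N : ℝ) ^ 2 / (lam * th))
      = lam ^ 2 * th ^ 2 * B ^ 2 + 4 * N ^ 2 * B * mu + 4 * N ^ 2 := by
    rw [discrim]; field_simp; ring
  rw [hdisc] at hroot
  convert hroot using 2 <;> ring
end

section
/- Assume λθ > Nμ. There exists a unique δ_cap ∈ (0, N/(λθ)) such that Δ_cr(δ_cap) = Δ_cr(0), with Δ_cr(δ) > Δ_cr(0) for 0 < δ < δ_cap and Δ_cr(δ) < Δ_cr(0) for δ_cap < δ < N/(λθ). -/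
open Real Set

open Filter Topology

/-!
With `x = λθ`, `Δ_cr(δ) = arccos (u δ) * √((N² - δ²x²) / (x² - N²μ²))`. Since
`√(1 - u²) = √(x² - N²μ²) √(N² - δ²x²) / (N x (1 + δμ))`, the derivative collapses to
`1 / (1 + δμ) - x² / √(x² - N²μ²) * (δ / √(N² - δ²x²)) * arccos (u δ)`:
it equals `1` at `δ = 0` and is strictly decreasing, because `u` is decreasing. So `Δ_cr` is strictly concave on `[0, N/x]`,
starts increasing and ends at `0 < Δ_cr(0)`. By the intermediate value theorem it returns to
`Δ_cr(0)` somewhere, and strict concavity (the graph lies strictly above its chords) makes the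
crossing unique and fixes the signs on either side.
-/

theorem StrictConcaveOn.exists_crossing_of_deriv_pos {f : ℝ → ℝ} {a b f' : ℝ} (hab : a < b)
    (hcont : ContinuousOn f (Icc a b)) (hconc : StrictConcaveOn ℝ (Icc a b) f)
    (hderiv : HasDerivWithinAt f f' (Ioi a) a) (hf' : 0 < f') (hfb : f b < f a) :
    ∃ c ∈ Ioo a b, f c = f a
      ∧ (∀ d, a < d → d < c → f d > f a)
      ∧ (∀ d, c < d → d < b → f d < f a)
      ∧ ∀ d ∈ Ioo a b, f d = f a → d = c := by
  obtain ⟨y, hy, hfy⟩ : ∃ y ∈ Ioo a b, f a < f y := by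
    have hslope := (hasDerivWithinAt_iff_tendsto_slope' (lt_irrefl a)).1 hderiv
    have hpos : ∀ᶠ y in 𝓝[>] a, 0 < slope f a y := hslope.eventually (eventually_gt_nhds hf')
    obtain ⟨y, hpos, hy⟩ := (hpos.and (Ioo_mem_nhdsGT hab)).exists
    exact ⟨y, hy, (slope_pos_iff_of_le hy.1.le).1 hpos⟩
  obtain ⟨c, hc, hfc⟩ : ∃ c ∈ Ioo y b, f c = f a :=
    intermediate_value_Ioo' hy.2.le (hcont.mono (Icc_subset_Icc hy.1.le le_rfl)) ⟨hfb, hfy⟩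
  have hcab : c ∈ Ioo a b := ⟨hy.1.trans hc.1, hc.2⟩
  have above : ∀ d, a < d → d < c → f d > f a := fun d had hdc => by
    simpa [hfc] using hconc.lt_on_openSegment (left_mem_Icc.2 hab.le) (Ioo_subset_Icc_self hcab)
      hcab.1.ne (Ioo_subset_openSegment ⟨had, hdc⟩)
  have below : ∀ d, c < d → d < b → f d < f a := fun d hcd hdb => by
    have := hconc.lt_on_openSegment (left_mem_Icc.2 hab.le) ⟨hcab.1.le.trans hcd.le, hdb.le⟩
      (hcab.1.trans hcd).ne (Ioo_subset_openSegment ⟨hcab.1, hcd⟩)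
    rw [hfc, min_lt_iff] at this
    exact this.resolve_left (lt_irrefl _)
  refine ⟨c, hcab, hfc, above, below, fun d hd hfd => ?_⟩
  rcases lt_trichotomy d c with h | h | h
  · exact absurd hfd (above d hd.1 h).ne'
  · exact h
  · exact absurd hfd (below d h hd.2).ne

noncomputable def cosArg (x μ n d : ℝ) : ℝ :=
  -(d * x ^ 2 + n ^ 2 * μ) / (n * x * (1 + d * μ))

noncomputable def critDelay (x μ n d : ℝ) : ℝ :=
  arccos (cosArg x μ n d) * √((n ^ 2 - d ^ 2 * x ^ 2) / (x ^ 2 - n ^ 2 * μ ^ 2))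

noncomputable def critDelayDeriv (x μ n d : ℝ) : ℝ :=
  1 / (1 + d * μ) - x ^ 2 / √(x ^ 2 - n ^ 2 * μ ^ 2) *
    (d / √(n ^ 2 - d ^ 2 * x ^ 2) * arccos (cosArg x μ n d))

section CriticalDelay

variable {x μ n d : ℝ}

theorem one_sub_cosArg_sq (hx : x ≠ 0) (hn : n ≠ 0) (hd : 1 + d * μ ≠ 0) :
    1 - cosArg x μ n d ^ 2
      = (x ^ 2 - n ^ 2 * μ ^ 2) * (n ^ 2 - d ^ 2 * x ^ 2) / (n * x * (1 + d * μ)) ^ 2 := by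
  unfold cosArg
  field_simp
  ring

theorem hasDerivAt_cosArg (hx : x ≠ 0) (hn : n ≠ 0) (hd : 1 + d * μ ≠ 0) :
    HasDerivAt (cosArg x μ n) (-(x ^ 2 - n ^ 2 * μ ^ 2) / (n * x * (1 + d * μ) ^ 2)) d := by
  have hnum : HasDerivAt (fun d => -(d * x ^ 2 + n ^ 2 * μ)) (-(1 * x ^ 2)) d :=
    (((hasDerivAt_id d).mul_const _).add_const _).neg
  have hden : HasDerivAt (fun d => n * x * (1 + d * μ)) (n * x * (1 * μ)) d :=
    (((hasDerivAt_id d).mul_const _).const_add _).const_mul _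
  refine (hnum.div hden (by simp [hx, hn, hd])).congr_deriv ?_
  field_simp
  ring

theorem cosArg_antitoneOn (hn : 0 < n) (hμ : 0 < μ) (hnx : n * μ < x) :
    AntitoneOn (cosArg x μ n) (Ici 0) := by
  intro d₁ hd₁ d₂ _ h
  have hx : 0 < x := (mul_pos hn hμ).trans hnx
  have h₁ : 0 < n * x * (1 + d₁ * μ) := by
    have := mul_nonneg hd₁.out hμ.le; positivity
  have h₂ : 0 < n * x * (1 + d₂ * μ) := by
    have := mul_nonneg (hd₁.out.trans h) hμ.le; positivity
  unfold cosArg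
  rw [div_le_div_iff₀ h₂ h₁]
  nlinarith [mul_nonneg (mul_nonneg hn.le hx.le) (mul_nonneg (sub_nonneg.2 h)
    (sub_nonneg.2 (mul_self_le_mul_self (mul_pos hn hμ).le hnx.le)))]

theorem sq_sub_sq_mul_sq_pos (hx : 0 < x) (hd : d ∈ Ico 0 (n / x)) :
    0 < n ^ 2 - d ^ 2 * x ^ 2 := by
  have hdx : d * x < n := (lt_div_iff₀ hx).1 hd.2
  nlinarith [mul_nonneg hd.1 hx.le]

theorem sqrt_one_sub_cosArg_sq (hn : 0 < n) (hμ : 0 < μ) (hnx : n * μ < x) (hd : 0 ≤ d) :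
    √(1 - cosArg x μ n d ^ 2)
      = √(x ^ 2 - n ^ 2 * μ ^ 2) * √(n ^ 2 - d ^ 2 * x ^ 2) / (n * x * (1 + d * μ)) := by
  have hx : 0 < x := (mul_pos hn hμ).trans hnx
  have hdμ : 0 < 1 + d * μ := by nlinarith
  rw [one_sub_cosArg_sq hx.ne' hn.ne' hdμ.ne', sqrt_div' _ (sq_nonneg _),
    sqrt_mul (by nlinarith [mul_pos hn hμ]), sqrt_sq (by positivity)]

theorem cosArg_mem_Ioo (hn : 0 < n) (hμ : 0 < μ) (hnx : n * μ < x) (hd : d ∈ Ico 0 (n / x)) :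
    cosArg x μ n d ∈ Ioo (-1) 1 := by
  have hx : 0 < x := (mul_pos hn hμ).trans hnx
  have hdμ : 0 < 1 + d * μ := by nlinarith [hd.1]
  have hK : 0 < x ^ 2 - n ^ 2 * μ ^ 2 := by nlinarith [mul_pos hn hμ]
  have h : 0 < 1 - cosArg x μ n d ^ 2 := by
    rw [one_sub_cosArg_sq hx.ne' hn.ne' hdμ.ne']
    have := sq_sub_sq_mul_sq_pos hx hd
    positivity
  exact abs_lt.1 ((sq_lt_one_iff_abs_lt_one _).1 (by linarith))

theorem critDelay_eq_mul_div (hK : 0 ≤ x ^ 2 - n ^ 2 * μ ^ 2) :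
    critDelay x μ n = fun d =>
      arccos (cosArg x μ n d) * √(n ^ 2 - d ^ 2 * x ^ 2) / √(x ^ 2 - n ^ 2 * μ ^ 2) := by
  ext d
  rw [critDelay, sqrt_div' _ hK, mul_div_assoc]

theorem hasDerivAt_arccos_cosArg (hn : 0 < n) (hμ : 0 < μ) (hnx : n * μ < x)
    (hd : d ∈ Ico 0 (n / x)) :
    HasDerivAt (fun d => arccos (cosArg x μ n d))
      (√(x ^ 2 - n ^ 2 * μ ^ 2) / ((1 + d * μ) * √(n ^ 2 - d ^ 2 * x ^ 2))) d := by
  have hx : 0 < x := (mul_pos hn hμ).trans hnx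
  have hdμ : 0 < 1 + d * μ := by nlinarith [hd.1]
  have hK : 0 < x ^ 2 - n ^ 2 * μ ^ 2 := by nlinarith [mul_pos hn hμ]
  have hP := sq_sub_sq_mul_sq_pos hx hd
  have hu := cosArg_mem_Ioo hn hμ hnx hd
  refine ((hasDerivAt_arccos hu.1.ne' hu.2.ne).comp d
    (hasDerivAt_cosArg hx.ne' hn.ne' hdμ.ne')).congr_deriv ?_
  rw [sqrt_one_sub_cosArg_sq hn hμ hnx hd.1]
  have hr := sq_sqrt hK.le
  have hrpos := sqrt_pos.2 hK
  have hspos := sqrt_pos.2 hP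
  field_simp
  rw [hr]

theorem hasDerivAt_sqrt_sq_sub_sq_mul_sq (hx : 0 < x) (hd : d ∈ Ico 0 (n / x)) :
    HasDerivAt (fun d => √(n ^ 2 - d ^ 2 * x ^ 2))
      (-(d * x ^ 2) / √(n ^ 2 - d ^ 2 * x ^ 2)) d := by
  have hP := sq_sub_sq_mul_sq_pos hx hd
  refine ((((hasDerivAt_pow 2 d).mul_const (x ^ 2)).const_sub (n ^ 2)).sqrt hP.ne').congr_deriv ?_
  field_simp
  ring

theorem hasDerivAt_critDelay (hn : 0 < n) (hμ : 0 < μ) (hnx : n * μ < x)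
    (hd : d ∈ Ico 0 (n / x)) : HasDerivAt (critDelay x μ n) (critDelayDeriv x μ n d) d := by
  have hx : 0 < x := (mul_pos hn hμ).trans hnx
  have hK : 0 < x ^ 2 - n ^ 2 * μ ^ 2 := by nlinarith [mul_pos hn hμ]
  have hrpos := sqrt_pos.2 hK
  have hspos := sqrt_pos.2 (sq_sub_sq_mul_sq_pos hx hd)
  rw [critDelay_eq_mul_div hK.le]
  refine (((hasDerivAt_arccos_cosArg hn hμ hnx hd).mul
    (hasDerivAt_sqrt_sq_sub_sq_mul_sq hx hd)).div_const _).congr_deriv ?_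
  have hdμ : 0 < 1 + d * μ := by nlinarith [hd.1]
  rw [critDelayDeriv]
  set s := √(n ^ 2 - d ^ 2 * x ^ 2)
  field_simp
  ring

theorem critDelayDeriv_strictAntiOn (hn : 0 < n) (hμ : 0 < μ) (hnx : n * μ < x) :
    StrictAntiOn (critDelayDeriv x μ n) (Ico 0 (n / x)) := by
  intro d₁ hd₁ d₂ hd₂ h
  have hx : 0 < x := (mul_pos hn hμ).trans hnx
  have hK : 0 < x ^ 2 - n ^ 2 * μ ^ 2 := by nlinarith [mul_pos hn hμ]
  have hP₂ := sq_sub_sq_mul_sq_pos hx hd₂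
  have hfirst : 1 / (1 + d₂ * μ) < 1 / (1 + d₁ * μ) :=
    one_div_lt_one_div_of_lt (by nlinarith [hd₁.1]) (by nlinarith)
  have hratio : d₁ / √(n ^ 2 - d₁ ^ 2 * x ^ 2) < d₂ / √(n ^ 2 - d₂ ^ 2 * x ^ 2) :=
    div_lt_div₀ h (sqrt_le_sqrt (by have := hd₁.1; gcongr)) (hd₁.1.trans h.le)
      (sqrt_pos.2 hP₂)
  have harccos : arccos (cosArg x μ n d₁) ≤ arccos (cosArg x μ n d₂) :=
    arccos_le_arccos (cosArg_antitoneOn hn hμ hnx hd₁.1 hd₂.1 h.le)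
  have harccos_pos : 0 < arccos (cosArg x μ n d₁) :=
    arccos_pos.2 (cosArg_mem_Ioo hn hμ hnx hd₁).2
  have hsecond :=
    mul_lt_mul hratio harccos harccos_pos (div_nonneg (hd₁.1.trans h.le) (sqrt_nonneg _))
  unfold critDelayDeriv
  have := mul_lt_mul_of_pos_left hsecond (div_pos (pow_pos hx 2) (sqrt_pos.2 hK))
  linarith

theorem continuousOn_critDelay (hn : 0 < n) (hμ : 0 < μ) (hnx : n * μ < x) :
    ContinuousOn (critDelay x μ n) (Icc 0 (n / x)) := by
  have hx : 0 < x := (mul_pos hn hμ).trans hnx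
  refine ContinuousOn.mul (continuous_arccos.comp_continuousOn
    (ContinuousOn.div (by fun_prop) (by fun_prop) fun d hd => ?_)) (by fun_prop)
  have := mul_nonneg hd.1 hμ.le
  positivity

theorem strictConcaveOn_critDelay (hn : 0 < n) (hμ : 0 < μ) (hnx : n * μ < x) :
    StrictConcaveOn ℝ (Icc 0 (n / x)) (critDelay x μ n) := by
  refine StrictAntiOn.strictConcaveOn_of_deriv (convex_Icc _ _)
    (continuousOn_critDelay hn hμ hnx) fun d₁ hd₁ d₂ hd₂ h => ?_
  rw [interior_Icc] at hd₁ hd₂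
  rw [(hasDerivAt_critDelay hn hμ hnx (Ioo_subset_Ico_self hd₁)).deriv,
    (hasDerivAt_critDelay hn hμ hnx (Ioo_subset_Ico_self hd₂)).deriv]
  exact critDelayDeriv_strictAntiOn hn hμ hnx (Ioo_subset_Ico_self hd₁)
    (Ioo_subset_Ico_self hd₂) h

theorem critDelay_div_eq_zero (hx : x ≠ 0) : critDelay x μ n (n / x) = 0 := by
  rw [critDelay, div_pow, div_mul_cancel₀ _ (pow_ne_zero 2 hx), sub_self, zero_div,
    sqrt_zero, mul_zero]

theorem critDelay_zero_pos (hn : 0 < n) (hμ : 0 < μ) (hnx : n * μ < x) :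
    0 < critDelay x μ n 0 := by
  have hx : 0 < x := (mul_pos hn hμ).trans hnx
  have hK : 0 < x ^ 2 - n ^ 2 * μ ^ 2 := by nlinarith [mul_pos hn hμ]
  exact mul_pos (arccos_pos.2 (cosArg_mem_Ioo hn hμ hnx ⟨le_rfl, by positivity⟩).2)
    (sqrt_pos.2 (by simp only [zero_pow two_ne_zero, zero_mul, sub_zero]; positivity))

end CriticalDelay

theorem Dcr_eq_critDelay (lam mu th : ℝ) (N : ℕ) :
    Dcr lam mu th N = critDelay (lam * th) mu N := by
  ext d
  rw [Dcr, critDelay, cosArg]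
  ring_nf

theorem dcap_exists_unique_general
    (lam mu th : ℝ) (N : ℕ) (hN : 0 < N)
    (hmu : 0 < mu)
    (hgt : lam * th > N * mu) :
    ∃ dcap ∈ Set.Ioo (0 : ℝ) ((N : ℝ) / (lam * th)),
      Dcr lam mu th N dcap = Dcr lam mu th N 0
      ∧ (∀ d, 0 < d → d < dcap → Dcr lam mu th N d > Dcr lam mu th N 0)
      ∧ (∀ d, dcap < d → d < (N : ℝ) / (lam * th) →
          Dcr lam mu th N d < Dcr lam mu th N 0)
      ∧ (∀ d' ∈ Set.Ioo (0 : ℝ) ((N : ℝ) / (lam * th)),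
          Dcr lam mu th N d' = Dcr lam mu th N 0 → d' = dcap) := by
  have hn : (0 : ℝ) < N := Nat.cast_pos.2 hN
  have hx : 0 < lam * th := (mul_pos hn hmu).trans hgt
  rw [Dcr_eq_critDelay]
  refine (strictConcaveOn_critDelay hn hmu hgt).exists_crossing_of_deriv_pos (div_pos hn hx)
    (continuousOn_critDelay hn hmu hgt)
    (hasDerivAt_critDelay hn hmu hgt ⟨le_rfl, div_pos hn hx⟩).hasDerivWithinAt
    (by simp [critDelayDeriv]) ?_
  rw [critDelay_div_eq_zero hx.ne']
  exact critDelay_zero_pos hn hmu hgt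

theorem dcap_exists_unique
    (lam mu th : ℝ) (N : ℕ) (hN : 0 < N)
    (hlam : 0 < lam) (hmu : 0 < mu) (hth : 0 < th)
    (hgt : lam * th > N * mu) :
    ∃ dcap ∈ Set.Ioo (0 : ℝ) ((N : ℝ) / (lam * th)),
      Dcr lam mu th N dcap = Dcr lam mu th N 0
      ∧ (∀ d, 0 < d → d < dcap → Dcr lam mu th N d > Dcr lam mu th N 0)
      ∧ (∀ d, dcap < d → d < (N : ℝ) / (lam * th) →
          Dcr lam mu th N d < Dcr lam mu th N 0)
      ∧ (∀ d' ∈ Set.Ioo (0 : ℝ) ((N : ℝ) / (lam * th)),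
          Dcr lam mu th N d' = Dcr lam mu th N 0 → d' = dcap) :=
  dcap_exists_unique_general lam mu th N hN hmu hgt
end
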